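/- arXiv:1801.00413 — 4 statements merged into one kernel-verified Lean document; each statement's English description precedes it below -/
import Mathlib

section
/- For an n-state ergodic homogeneous Markov chain with transition matrix T, the mean first passage time from state i to state j satisfies m_ij = (l#_jj - l#_ij)/π_j for i ≠ j and m_jj = 1/π_j, where L# = [l#_ij] is the group inverse of L = I - T and π is the stationary distribution of T. -/
open Finset Relation Matrix
open scoped Classical

/-- `T` is a (row-)stochastic matrix. -/
def IsStochastic {n : ℕ} (T : Matrix (Fin n) (Fin n) ℝ) : Prop :=
  (∀ i j, 0 ≤ T i j) ∧ ∀ i, ∑ j, T i j = 1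

/-- Irreducibility of a Markov chain: every state leads to every state. -/
def IsIrreducibleMC {n : ℕ} (T : Matrix (Fin n) (Fin n) ℝ) : Prop :=
  ∀ i j, Relation.TransGen (fun a b => 0 < T a b) i j

/-- `pi` is the stationary distribution of `T`. -/
def IsStationaryDist {n : ℕ} (T : Matrix (Fin n) (Fin n) ℝ) (pi : Fin n → ℝ) : Prop :=
  (∀ i, 0 ≤ pi i) ∧ (∑ i, pi i) = 1 ∧ ∀ j, ∑ i, pi i * T i j = pi j

/-- The step relation of a set `A` of arcs. -/
def arcStep {n : ℕ} (A : Finset (Fin n × Fin n)) (x y : Fin n) : Prop := (x, y) ∈ A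

/-- `A` is an in-forest: no loops, out-degree at most one, and no directed cycles;
equivalently, every weak component is a converging tree. -/
def IsInForest {n : ℕ} (A : Finset (Fin n × Fin n)) : Prop :=
  (∀ a ∈ A, a.1 ≠ a.2) ∧
  (∀ v : Fin n, (A.filter fun a => a.1 = v).card ≤ 1) ∧
  ∀ v : Fin n, ¬ Relation.TransGen (arcStep A) v v

/-- `j` is a root (no outgoing arc) of the arc set `A`. -/
def IsRootOf {n : ℕ} (A : Finset (Fin n × Fin n)) (j : Fin n) : Prop := ∀ a ∈ A, a.1 ≠ j

/-- In the in-forest `A`, vertex `i` belongs to the tree converging to the root `j`. -/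
def InTreeOf {n : ℕ} (A : Finset (Fin n × Fin n)) (i j : Fin n) : Prop :=
  IsRootOf A j ∧ Relation.ReflTransGen (arcStep A) i j

/-- The weight of an arc set: the product of its arc weights. -/
noncomputable def digraphWeight {n : ℕ} (W : Matrix (Fin n) (Fin n) ℝ)
    (A : Finset (Fin n × Fin n)) : ℝ :=
  ∏ a ∈ A, W a.1 a.2

/-- Total weight of the in-forests satisfying the predicate `P`. -/
noncomputable def forestWeight {n : ℕ} (W : Matrix (Fin n) (Fin n) ℝ)
    (P : Finset (Fin n × Fin n) → Prop) : ℝ :=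
  ∑ A : Finset (Fin n × Fin n), if IsInForest A ∧ P A then digraphWeight W A else 0

/-- `σ_k`: total weight of in-forests with `k` arcs. -/
noncomputable def sigmaF {n : ℕ} (W : Matrix (Fin n) (Fin n) ℝ) (k : ℕ) : ℝ :=
  forestWeight W fun A => A.card = k

/-- `q^(k)_{ij}`: total weight of in-forests with `k` arcs in which vertex `i`
belongs to the tree converging to `j`. -/
noncomputable def qF {n : ℕ} (W : Matrix (Fin n) (Fin n) ℝ) (k : ℕ) (i j : Fin n) : ℝ :=
  forestWeight W fun A => A.card = k ∧ InTreeOf A i j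

/-- `q_j`: total weight of spanning trees converging to `j`. -/
noncomputable def treeW {n : ℕ} (W : Matrix (Fin n) (Fin n) ℝ) (j : Fin n) : ℝ :=
  qF W (n - 1) j j

/-- `f_{ij}`: total weight of 2-tree in-forests having one tree containing `i`
and the other tree converging to `j`. -/
noncomputable def fF {n : ℕ} (W : Matrix (Fin n) (Fin n) ℝ) (i j : Fin n) : ℝ :=
  forestWeight W fun A =>
    A.card = n - 2 ∧ IsRootOf A j ∧ ¬ Relation.ReflTransGen (arcStep A) i j

/-- `X` is the group inverse of `L`. -/
def IsGroupInverse {n : ℕ} (L X : Matrix (Fin n) (Fin n) ℝ) : Prop :=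
  L * X * L = L ∧ X * L * X = X ∧ L * X = X * L

/-- `M` is the matrix of mean first passage times (with `M j j` the mean return time):
the standard first-step equations. -/
def IsMFPTMatrix {n : ℕ} (T M : Matrix (Fin n) (Fin n) ℝ) : Prop :=
  ∀ i j, M i j = 1 + ∑ k ∈ Finset.univ.filter (fun k => k ≠ j), T i k * M k j

/-- `m` is the hitting-time function with `m i i = 0`. -/
def IsHittingTime {n : ℕ} (T : Matrix (Fin n) (Fin n) ℝ) (m : Fin n → Fin n → ℝ) : Prop :=
  (∀ i, m i i = 0) ∧ ∀ i j, i ≠ j → m i j = 1 + ∑ k, T i k * m k j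

/-- The Laplacian matrix of the weight matrix `W`. -/
noncomputable def lap {n : ℕ} (W : Matrix (Fin n) (Fin n) ℝ) : Matrix (Fin n) (Fin n) ℝ :=
  Matrix.diagonal (fun i => ∑ j, W i j) - W

/-! The analytic input is the maximum principle: for irreducible stochastic `T` every
`T`-harmonic vector is constant, so any `Q` with `T Q = Q` equals `𝟙 (π Q)`. Applied to
`Q = I - L# L` this gives `L# L = I - 𝟙 π`, and `L# 𝟙 = L# L L# 𝟙 = L# L# L 𝟙 = 0`.
The first-step equations read `L M = 𝟙 𝟙ᵀ - T D` with `D = diag M`. Multiplying by `π` on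
the left gives `π_j m_jj = 1`; multiplying by `L#` gives `M - 𝟙 (π M) = (I - 𝟙 π - L#) D`,
and subtracting row `j` from row `i` in column `j` gives `m_ij = (l#_jj - l#_ij) m_jj`. -/

section MarkovChain

variable {n : ℕ} {T : Matrix (Fin n) (Fin n) ℝ} {pi : Fin n → ℝ}

theorem IsStochastic.mulVec_one (hT : IsStochastic T) : T *ᵥ 1 = 1 := by
  ext i
  simp [mulVec, dotProduct, hT.2 i]

theorem IsStochastic.one_sub_mulVec_one (hT : IsStochastic T) : (1 - T) *ᵥ 1 = 0 := by
  rw [sub_mulVec, one_mulVec, hT.mulVec_one, sub_self]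

theorem IsStationaryDist.vecMul_eq (hpi : IsStationaryDist T pi) : pi ᵥ* T = pi :=
  funext hpi.2.2

theorem IsStationaryDist.vecMul_one_sub (hpi : IsStationaryDist T pi) : pi ᵥ* (1 - T) = 0 := by
  rw [vecMul_sub, vecMul_one, hpi.vecMul_eq, sub_self]

theorem IsStationaryDist.dotProduct_one (hpi : IsStationaryDist T pi) : pi ⬝ᵥ 1 = 1 := by
  simpa [dotProduct] using hpi.2.1

theorem IsStochastic.apply_eq_of_forall_le_of_pos (hT : IsStochastic T) {v : Fin n → ℝ}
    (hv : T *ᵥ v = v) {a b : Fin n} (hmax : ∀ k, v k ≤ v a) (hab : 0 < T a b) :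
    v b = v a := by
  have hsum : ∑ k, T a k * (v a - v k) = 0 := by
    have := congrFun hv a
    simp only [mulVec, dotProduct] at this
    simp only [mul_sub, Finset.sum_sub_distrib, ← Finset.sum_mul, hT.2 a, one_mul, this, sub_self]
  have hterm := (Finset.sum_eq_zero_iff_of_nonneg fun k _ =>
    mul_nonneg (hT.1 a k) (sub_nonneg.2 (hmax k))).1 hsum b (Finset.mem_univ b)
  linarith [(mul_eq_zero.1 hterm).resolve_left hab.ne']

theorem IsIrreducibleMC.apply_eq_of_mulVec_eq_self (hirr : IsIrreducibleMC T)
    (hT : IsStochastic T) {v : Fin n → ℝ} (hv : T *ᵥ v = v) (i j : Fin n) : v i = v j := by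
  obtain ⟨i₀, -, hmax⟩ := Finset.exists_max_image Finset.univ v ⟨i, Finset.mem_univ i⟩
  have hconst : ∀ b, v b = v i₀ := fun b => by
    induction hirr i₀ b with
    | single h => exact hT.apply_eq_of_forall_le_of_pos hv (fun k => hmax k (mem_univ k)) h
    | tail _ h ih =>
      exact (hT.apply_eq_of_forall_le_of_pos hv (fun k => ih ▸ hmax k (mem_univ k)) h).trans ih
  rw [hconst i, hconst j]

theorem IsIrreducibleMC.eq_vecMulVec_of_mul_eq_self (hirr : IsIrreducibleMC T)
    (hT : IsStochastic T) (hpi : IsStationaryDist T pi) {Q : Matrix (Fin n) (Fin n) ℝ}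
    (hQ : T * Q = Q) : Q = vecMulVec 1 (pi ᵥ* Q) := by
  ext a b
  have hcol : ∀ i, Q i b = Q a b := fun i =>
    hirr.apply_eq_of_mulVec_eq_self hT (v := fun k => Q k b)
      (funext fun i => congrFun₂ hQ i b) i a
  simp only [vecMulVec_apply, Pi.one_apply, one_mul, vecMul, dotProduct, hcol, ← Finset.sum_mul,
    hpi.2.1]

theorem IsGroupInverse.mulVec_eq_zero {L X : Matrix (Fin n) (Fin n) ℝ} (hX : IsGroupInverse L X)
    {v : Fin n → ℝ} (hv : L *ᵥ v = 0) : X *ᵥ v = 0 := by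
  calc X *ᵥ v = (X * X * L) *ᵥ v := by
        rw [Matrix.mul_assoc X X L, ← hX.2.2, ← Matrix.mul_assoc, hX.2.1]
    _ = 0 := by rw [← mulVec_mulVec, hv, mulVec_zero]

theorem IsGroupInverse.mul_one_sub_eq {X : Matrix (Fin n) (Fin n) ℝ}
    (hX : IsGroupInverse (1 - T) X) (hT : IsStochastic T) (hirr : IsIrreducibleMC T)
    (hpi : IsStationaryDist T pi) : X * (1 - T) = 1 - vecMulVec 1 pi := by
  set Q := 1 - X * (1 - T)
  have hQ : T * Q = Q := by
    have h : (1 - T) * Q = 0 := by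
      rw [Matrix.mul_sub, Matrix.mul_one, ← Matrix.mul_assoc, hX.1, sub_self]
    rwa [Matrix.sub_mul, Matrix.one_mul, sub_eq_zero, eq_comm] at h
  have hpiQ : pi ᵥ* Q = pi := by
    rw [vecMul_sub, vecMul_one, ← hX.2.2, ← vecMul_vecMul, hpi.vecMul_one_sub, zero_vecMul,
      sub_zero]
  rw [← hpiQ, ← hirr.eq_vecMulVec_of_mul_eq_self hT hpi hQ, sub_sub_cancel]

theorem IsMFPTMatrix.one_sub_mul_eq {M : Matrix (Fin n) (Fin n) ℝ} (hM : IsMFPTMatrix T M) :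
    (1 - T) * M = vecMulVec 1 1 - T * diagonal M.diag := by
  rw [Matrix.sub_mul, Matrix.one_mul]
  ext i j
  have h := hM i j
  rw [Finset.filter_ne', Finset.sum_erase_eq_sub (Finset.mem_univ j)] at h
  simp only [Matrix.sub_apply, mul_diagonal, diag_apply, vecMulVec_apply, Pi.one_apply, mul_one]
  rw [mul_apply]
  linarith

theorem IsMFPTMatrix.mul_diag_eq_one {M : Matrix (Fin n) (Fin n) ℝ} (hM : IsMFPTMatrix T M)
    (hpi : IsStationaryDist T pi) (j : Fin n) : pi j * M j j = 1 := by
  have h := congrFun (congrArg (pi ᵥ* ·) hM.one_sub_mul_eq) j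
  simp only [← vecMul_vecMul, hpi.vecMul_one_sub, zero_vecMul, vecMul_sub, vecMul_vecMulVec,
    hpi.dotProduct_one, one_smul, hpi.vecMul_eq] at h
  rw [Pi.zero_apply, Pi.sub_apply, vecMul_diagonal, Pi.one_apply, diag_apply] at h
  linarith

theorem IsMFPTMatrix.sub_vecMulVec_eq {M X : Matrix (Fin n) (Fin n) ℝ} (hM : IsMFPTMatrix T M)
    (hXL : X * (1 - T) = 1 - vecMulVec 1 pi) (hX1 : X *ᵥ 1 = 0) :
    M - vecMulVec 1 (pi ᵥ* M) = (1 - vecMulVec 1 pi - X) * diagonal M.diag := by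
  have hXT : X * T = X - (1 - vecMulVec 1 pi) := by
    rw [← hXL, Matrix.mul_sub, Matrix.mul_one, sub_sub_cancel]
  calc M - vecMulVec 1 (pi ᵥ* M) = X * (1 - T) * M := by
        rw [hXL, Matrix.sub_mul, Matrix.one_mul, vecMulVec_mul]
    _ = X * vecMulVec 1 1 - X * T * diagonal M.diag := by
        rw [Matrix.mul_assoc, hM.one_sub_mul_eq, Matrix.mul_sub, Matrix.mul_assoc]
    _ = (1 - vecMulVec 1 pi - X) * diagonal M.diag := by
        rw [mul_vecMulVec, hX1, zero_vecMulVec, hXT, zero_sub, ← Matrix.neg_mul, neg_sub]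

theorem IsMFPTMatrix.apply_eq_sub_mul_apply {M X : Matrix (Fin n) (Fin n) ℝ}
    (hM : IsMFPTMatrix T M) (hXL : X * (1 - T) = 1 - vecMulVec 1 pi) (hX1 : X *ᵥ 1 = 0)
    {i j : Fin n} (hij : i ≠ j) : M i j = (X j j - X i j) * M j j := by
  have h := fun a => congrFun₂ (hM.sub_vecMulVec_eq hXL hX1) a j
  simp only [Matrix.sub_apply, mul_diagonal, diag_apply, vecMulVec_apply, Pi.one_apply,
    one_mul, one_apply] at h
  have hi := h i
  have hj := h j
  rw [if_neg hij] at hi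
  rw [if_pos rfl] at hj
  linear_combination hi - hj

end MarkovChain

theorem stmt0_general {n : ℕ} (T : Matrix (Fin n) (Fin n) ℝ)
    (hst : IsStochastic T) (hirr : IsIrreducibleMC T)
    (pi : Fin n → ℝ) (hpi : IsStationaryDist T pi)
    (X : Matrix (Fin n) (Fin n) ℝ) (hX : IsGroupInverse (1 - T) X)
    (M : Matrix (Fin n) (Fin n) ℝ) (hM : IsMFPTMatrix T M) :
    (∀ i j, i ≠ j → M i j = (X j j - X i j) / pi j) ∧ ∀ j, M j j = 1 / pi j := by
  have hreturn : ∀ j, M j j = 1 / pi j := fun j => by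
    have h := hM.mul_diag_eq_one hpi j
    rw [eq_div_iff (left_ne_zero_of_mul_eq_one h), mul_comm, h]
  refine ⟨fun i j hij => ?_, hreturn⟩
  have hXL := hX.mul_one_sub_eq hst hirr hpi
  have hX1 := hX.mulVec_eq_zero hst.one_sub_mulVec_one
  rw [hM.apply_eq_sub_mul_apply hXL hX1 hij, hreturn, mul_one_div]

/-- Meyer's formula for mean first passage times via the group inverse
of `L = I - T` and the stationary distribution. -/
theorem stmt0 {n : ℕ} (hn : 1 ≤ n) (T : Matrix (Fin n) (Fin n) ℝ)
    (hst : IsStochastic T) (hirr : IsIrreducibleMC T)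
    (pi : Fin n → ℝ) (hpi : IsStationaryDist T pi)
    (X : Matrix (Fin n) (Fin n) ℝ) (hX : IsGroupInverse (1 - T) X)
    (M : Matrix (Fin n) (Fin n) ℝ) (hM : IsMFPTMatrix T M) :
    (∀ i j, i ≠ j → M i j = (X j j - X i j) / pi j) ∧ ∀ j, M j j = 1 / pi j :=
  stmt0_general T hst hirr pi hpi X hX M hM
end

section
/- Markov Chain Tree Theorem: for an ergodic Markov chain with transition matrix T, the stationary probability of state j equals q_j / q, where q_j is the total weight of spanning trees converging to j in the weighted digraph corresponding to T, and q = Σ_k q_k. -/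
open Finset Relation Matrix
open scoped Classical

/-!
Adding to a tree converging to `i` an arc `(i, j)`, or to a tree converging to `j` an arc
`(j, k)`, yields a functional digraph in which every vertex reaches `j`, and each such digraph
arises exactly once in either way. Hence `∑ i, q_i T i j = q_j ∑ k, T j k`, so `q` is invariant
under a stochastic `T`. Irreducibility gives every `q_j` a positive-weight tree (shortest paths to
`j`), so `q / ∑ q` is a stationary distribution, and the stationary distribution of an irreducible
chain is unique.
-/

namespace Relation

variable {α : Type*} {r : α → α → Prop}

theorem ReflTransGen.restrict_source_ne {a b : α} (h : ReflTransGen r a b) :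
    ReflTransGen (fun x y => r x y ∧ x ≠ b) a b := by
  induction h using ReflTransGen.head_induction_on with
  | refl => exact .refl
  | @head x y hxy _ ih =>
    rcases eq_or_ne x b with rfl | hx
    · exact .refl
    · exact .head ⟨hxy, hx⟩ ih

theorem ReflTransGen.restrict_target_ne {a b : α} (h : ReflTransGen r a b) :
    ReflTransGen (fun x y => r x y ∧ y ≠ a) a b := by
  induction h with
  | refl => exact .refl
  | @tail x y _ hxy ih =>
    rcases eq_or_ne y a with rfl | hy
    · exact .refl
    · exact .tail ih ⟨hxy, hy⟩

theorem ReflTransGen.back_of_transGen_self (hr : ∀ {a b c}, r a b → r a c → b = c) {a b : α}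
    (ha : TransGen r a a) (h : ReflTransGen r a b) : ReflTransGen r b a := by
  induction h with
  | refl => exact .refl
  | @tail x y hax hxy ih =>
    obtain ⟨z, hxz, hzx⟩ := TransGen.head'_iff.mp ((TransGen.trans_right ih ha).trans_left hax)
    exact (hr hxz hxy ▸ hzx).trans ih

end Relation

section ArcSets

variable {n : ℕ} {A : Finset (Fin n × Fin n)}

abbrev outDeg (A : Finset (Fin n × Fin n)) (v : Fin n) : ℕ :=
  (A.filter fun a => a.1 = v).card

lemma outDeg_eq_zero_iff {v : Fin n} : outDeg A v = 0 ↔ IsRootOf A v := by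
  simp [IsRootOf, Finset.filter_eq_empty_iff]

lemma exists_mem_of_outDeg_eq_one {v : Fin n} (h : outDeg A v = 1) : ∃ w, (v, w) ∈ A := by
  obtain ⟨a, ha⟩ := Finset.card_eq_one.mp h
  obtain ⟨haA, rfl⟩ := Finset.mem_filter.mp (ha ▸ Finset.mem_singleton_self a)
  exact ⟨a.2, haA⟩

lemma arcStep_functional (h : ∀ v, outDeg A v ≤ 1) {a b c : Fin n}
    (hab : arcStep A a b) (hac : arcStep A a c) : b = c := by
  have := Finset.card_le_one.mp (h a) _ (Finset.mem_filter.mpr ⟨hab, rfl⟩) _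
    (Finset.mem_filter.mpr ⟨hac, rfl⟩)
  exact congrArg Prod.snd this

lemma card_eq_sum_outDeg (A : Finset (Fin n × Fin n)) : A.card = ∑ v, outDeg A v :=
  Finset.card_eq_sum_card_fiberwise fun a _ => Finset.mem_univ a.1

lemma outDeg_insert {u w : Fin n} (h : (u, w) ∉ A) (v : Fin n) :
    outDeg (insert (u, w) A) v = outDeg A v + if v = u then 1 else 0 := by
  rw [outDeg, Finset.filter_insert]
  by_cases hv : v = u
  · subst hv
    rw [if_pos rfl, if_pos rfl,
      Finset.card_insert_of_notMem fun h' => h (Finset.mem_filter.mp h').1]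
  · rw [if_neg (Ne.symm hv), if_neg hv, add_zero]

lemma outDeg_erase {u w : Fin n} (h : (u, w) ∈ A) (v : Fin n) :
    outDeg (A.erase (u, w)) v = outDeg A v - if v = u then 1 else 0 := by
  rw [outDeg, Finset.filter_erase]
  by_cases hv : v = u
  · subst hv
    have hmem : (v, w) ∈ A.filter fun a => a.1 = v := Finset.mem_filter.mpr ⟨h, rfl⟩
    rw [if_pos rfl, Finset.card_erase_of_mem hmem]
  · rw [if_neg hv, Nat.sub_zero,
      Finset.erase_eq_of_notMem fun h' => hv (Finset.mem_filter.mp h').2.symm]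

end ArcSets

section InTrees

variable {n : ℕ} {A : Finset (Fin n × Fin n)}

structure IsInTree (A : Finset (Fin n × Fin n)) (r : Fin n) : Prop where
  outDeg_eq : ∀ v, outDeg A v = if v = r then 0 else 1
  reach : ∀ v, ReflTransGen (arcStep A) v r

namespace IsInTree

variable {r : Fin n}

lemma outDeg_le_one (hA : IsInTree A r) (v : Fin n) : outDeg A v ≤ 1 := by
  rw [hA.outDeg_eq v]; split_ifs <;> simp

lemma isRootOf (hA : IsInTree A r) : IsRootOf A r :=
  outDeg_eq_zero_iff.mp (by simpa using hA.outDeg_eq r)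

lemma notMem (hA : IsInTree A r) (w : Fin n) : (r, w) ∉ A :=
  fun h => hA.isRootOf _ h rfl

/-- A cycle through `v` would bring the root back to `v`, but the root has no outgoing arc. -/
lemma not_transGen (hA : IsInTree A r) (v : Fin n) : ¬ TransGen (arcStep A) v v := by
  intro hv
  have hrv := (hA.reach v).back_of_transGen_self (r := arcStep A)
    (arcStep_functional hA.outDeg_le_one) hv
  obtain ⟨w, hrw, -⟩ := TransGen.head'_iff.mp (TransGen.trans_right hrv hv)
  exact hA.isRootOf _ hrw rfl

lemma card (hA : IsInTree A r) : A.card = n - 1 := by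
  simp [card_eq_sum_outDeg A, hA.outDeg_eq, Finset.sum_ite, Finset.filter_ne']

lemma isInForest (hA : IsInTree A r) : IsInForest A := by
  refine ⟨fun ⟨x, y⟩ hxy hloop => ?_, hA.outDeg_le_one, hA.not_transGen⟩
  obtain rfl : x = y := hloop
  exact hA.not_transGen x (.single hxy)

end IsInTree

lemma isInTree_of_isInForest {r : Fin n} (hA : IsInForest A) (hcard : A.card = n - 1)
    (hr : IsRootOf A r) : IsInTree A r := by
  have hle : ∀ v ∈ Finset.univ, outDeg A v ≤ if v = r then 0 else 1 := fun v _ => by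
    split_ifs with hv
    · exact (outDeg_eq_zero_iff.mpr (hv ▸ hr)).le
    · exact hA.2.1 v
  have hsum : ∑ v, outDeg A v = ∑ v, if v = r then 0 else 1 := by
    simp [← card_eq_sum_outDeg, hcard, Finset.sum_ite, Finset.filter_ne']
  have hdeg v := (Finset.sum_eq_sum_iff_of_le hle).mp hsum v (Finset.mem_univ v)
  refine ⟨hdeg, fun v => ?_⟩
  have : Std.Irrefl (flip (TransGen (arcStep A))) := ⟨hA.2.2⟩
  have : IsTrans (Fin n) (flip (TransGen (arcStep A))) := ⟨fun _ _ _ h₁ h₂ => h₂.trans h₁⟩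
  have hwf : WellFounded (flip (TransGen (arcStep A))) := Finite.wellFounded_of_trans_of_irrefl _
  induction v using hwf.induction with
  | _ v ih =>
    rcases eq_or_ne v r with rfl | hvr
    · exact .refl
    · obtain ⟨w, hvw⟩ := exists_mem_of_outDeg_eq_one (by simpa [hvr] using hdeg v)
      exact .head hvw (ih w (.single hvw))

end InTrees

section Unicyclic

variable {n : ℕ} {A C : Finset (Fin n × Fin n)}

/-- A functional digraph (every out-degree one, loops allowed) in which every vertex reaches `j`,
so that its unique cycle passes through `j`. -/
structure IsUnicyclicThrough (A : Finset (Fin n × Fin n)) (j : Fin n) : Prop where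
  outDeg_eq_one : ∀ v, outDeg A v = 1
  reach : ∀ v, ReflTransGen (arcStep A) v j

lemma IsInTree.isUnicyclicThrough_insert {r : Fin n} (hA : IsInTree A r) (w : Fin n) :
    IsUnicyclicThrough (insert (r, w) A) r where
  outDeg_eq_one v := by rw [outDeg_insert (hA.notMem w), hA.outDeg_eq]; split_ifs <;> rfl
  reach v := ReflTransGen.mono (fun _ _ h => Finset.mem_insert_of_mem h) _ _ (hA.reach v)

namespace IsUnicyclicThrough

variable {j : Fin n}

lemma of_reflTransGen (hC : IsUnicyclicThrough C j) {t : Fin n}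
    (h : ReflTransGen (arcStep C) j t) : IsUnicyclicThrough C t :=
  ⟨hC.outDeg_eq_one, fun v => (hC.reach v).trans h⟩

lemma isInTree_erase (hC : IsUnicyclicThrough C j) {v w : Fin n} (hvw : (v, w) ∈ C)
    (hjv : ReflTransGen (arcStep C) j v) : IsInTree (C.erase (v, w)) v where
  outDeg_eq u := by rw [outDeg_erase hvw, hC.outDeg_eq_one]; split_ifs <;> rfl
  reach u := ReflTransGen.mono
    (fun _ _ h => Finset.mem_erase.mpr ⟨fun he => h.2 (congrArg Prod.fst he), h.1⟩)
    _ _ ((hC.reach u).trans hjv).restrict_source_ne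

lemma exists_mem_into (hC : IsUnicyclicThrough C j) :
    ∃ i, (i, j) ∈ C ∧ ReflTransGen (arcStep C) j i := by
  obtain ⟨k, hjk⟩ := exists_mem_of_outDeg_eq_one (hC.outDeg_eq_one j)
  obtain ⟨i, hji, hij⟩ := TransGen.tail'_iff.mp (TransGen.head' hjk (hC.reach k))
  exact ⟨i, hij, hji⟩

/-- Erasing one cycle arc into `j` leaves an in-tree, in which a second one would close a cycle. -/
lemma eq_of_mem_into (hC : IsUnicyclicThrough C j) {i i' : Fin n} (hi : (i, j) ∈ C)
    (hji : ReflTransGen (arcStep C) j i) (hi' : (i', j) ∈ C)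
    (hji' : ReflTransGen (arcStep C) j i') : i = i' := by
  by_contra hne
  have hmem : (i', j) ∈ C.erase (i, j) :=
    Finset.mem_erase.mpr ⟨fun he => hne (congrArg Prod.fst he).symm, hi'⟩
  have hpath : ReflTransGen (arcStep (C.erase (i, j))) j i' := ReflTransGen.mono
    (fun _ _ h => Finset.mem_erase.mpr ⟨fun he => h.2 (congrArg Prod.snd he), h.1⟩)
    _ _ hji'.restrict_target_ne
  exact (hC.isInTree_erase hi hji).not_transGen i' (TransGen.head' hmem hpath)

lemma eq_of_mem_out (hC : IsUnicyclicThrough C j) {k k' : Fin n} (hk : (j, k) ∈ C)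
    (hk' : (j, k') ∈ C) : k = k' :=
  arcStep_functional (fun v => (hC.outDeg_eq_one v).le) hk hk'

end IsUnicyclicThrough

end Unicyclic

section TreeSums

variable {n : ℕ} (W : Matrix (Fin n) (Fin n) ℝ)

lemma treeW_eq_sum_isInTree (r : Fin n) :
    treeW W r = ∑ A ∈ Finset.univ.filter (IsInTree · r), digraphWeight W A := by
  rw [treeW, qF, forestWeight, Finset.sum_filter]
  refine Finset.sum_congr rfl fun A _ => ?_
  congr 1
  exact propext ⟨fun ⟨hA, hcard, hr, _⟩ => isInTree_of_isInForest hA hcard hr,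
    fun hA => ⟨hA.isInForest, hA.card, hA.isRootOf, .refl⟩⟩

lemma digraphWeight_insert_of_isInTree {A : Finset (Fin n × Fin n)} {r : Fin n}
    (hA : IsInTree A r) (w : Fin n) :
    digraphWeight W (insert (r, w) A) = digraphWeight W A * W r w := by
  rw [digraphWeight, Finset.prod_insert (hA.notMem w), mul_comm, digraphWeight]

/-- The added arc `(i, j)` is recovered as the unique cycle arc entering `j`. -/
lemma sum_treeW_mul_eq (j : Fin n) :
    ∑ i, treeW W i * W i j =
      ∑ C ∈ Finset.univ.filter (IsUnicyclicThrough · j), digraphWeight W C := by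
  simp_rw [treeW_eq_sum_isInTree, Finset.sum_mul]
  rw [Finset.sum_sigma']
  have key : ∀ p ∈ Finset.univ.sigma fun i => Finset.univ.filter (IsInTree · i),
      IsInTree p.2 p.1 ∧ IsUnicyclicThrough (insert (p.1, j) p.2) j := by
    rintro ⟨i, A⟩ hA
    replace hA : IsInTree A i := by simpa using hA
    exact ⟨hA, (hA.isUnicyclicThrough_insert j).of_reflTransGen
      (.single (Finset.mem_insert_self _ _))⟩
  refine Finset.sum_nbij (fun p => insert (p.1, j) p.2)
    (fun p hp => by simpa using (key p hp).2) ?_ ?_ ?_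
  · rintro ⟨i, A⟩ hA ⟨i', A'⟩ hA' heq
    obtain ⟨hT, hC⟩ := key _ hA
    obtain ⟨hT', -⟩ := key _ hA'
    simp only at heq hT hT' hC
    obtain rfl := hC.eq_of_mem_into (i' := i') (Finset.mem_insert_self _ _)
      ((hT.isUnicyclicThrough_insert j).reach j) (heq ▸ Finset.mem_insert_self (i', j) A')
      (heq ▸ (hT'.isUnicyclicThrough_insert j).reach j)
    rw [← Finset.erase_insert (hT.notMem j), heq, Finset.erase_insert (hT'.notMem j)]
  · intro C hC
    replace hC : IsUnicyclicThrough C j := by simpa using hC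
    obtain ⟨i, hij, hji⟩ := hC.exists_mem_into
    refine ⟨⟨i, C.erase (i, j)⟩, ?_, Finset.insert_erase hij⟩
    simpa using hC.isInTree_erase hij hji
  · rintro ⟨i, A⟩ hA
    exact (digraphWeight_insert_of_isInTree W (key _ hA).1 j).symm

/-- The added arc `(j, k)` is recovered as the unique arc leaving `j`. -/
lemma treeW_mul_sum_eq (j : Fin n) :
    treeW W j * ∑ k, W j k =
      ∑ C ∈ Finset.univ.filter (IsUnicyclicThrough · j), digraphWeight W C := by
  rw [treeW_eq_sum_isInTree, Finset.sum_mul_sum, Finset.sum_comm, Finset.sum_sigma']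
  have key : ∀ p ∈ Finset.univ.sigma fun _ => Finset.univ.filter (IsInTree · j),
      IsInTree p.2 j ∧ IsUnicyclicThrough (insert (j, p.1) p.2) j := by
    rintro ⟨k, A⟩ hA
    replace hA : IsInTree A j := by simpa using hA
    exact ⟨hA, hA.isUnicyclicThrough_insert k⟩
  refine Finset.sum_nbij (fun p => insert (j, p.1) p.2)
    (fun p hp => by simpa using (key p hp).2) ?_ ?_ ?_
  · rintro ⟨k, A⟩ hA ⟨k', A'⟩ hA' heq
    obtain ⟨hT, hC⟩ := key _ hA
    obtain ⟨hT', -⟩ := key _ hA'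
    simp only at heq hT hT' hC
    obtain rfl := hC.eq_of_mem_out (Finset.mem_insert_self _ _)
      (heq ▸ Finset.mem_insert_self (j, k') A')
    rw [← Finset.erase_insert (hT.notMem k), heq, Finset.erase_insert (hT'.notMem k)]
  · intro C hC
    replace hC : IsUnicyclicThrough C j := by simpa using hC
    obtain ⟨k, hjk⟩ := exists_mem_of_outDeg_eq_one (hC.outDeg_eq_one j)
    refine ⟨⟨k, C.erase (j, k)⟩, ?_, Finset.insert_erase hjk⟩
    simpa using hC.isInTree_erase hjk .refl
  · rintro ⟨k, A⟩ hA
    exact (digraphWeight_insert_of_isInTree W (key _ hA).1 k).symm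

end TreeSums

section Positivity

variable {n : ℕ} {T : Matrix (Fin n) (Fin n) ℝ}

lemma exists_pow_apply_pos (hT : ∀ i j, 0 ≤ T i j) {i j : Fin n}
    (h : ReflTransGen (fun a b => 0 < T a b) i j) : ∃ k, 0 < (T ^ k) i j := by
  induction h with
  | refl => exact ⟨0, by simp⟩
  | @tail b c _ hbc ih =>
    obtain ⟨k, hk⟩ := ih
    refine ⟨k + 1, ?_⟩
    rw [pow_succ, mul_apply]
    exact (Finset.sum_pos_iff_of_nonneg fun l _ =>
      mul_nonneg (pow_apply_nonneg hT k i l) (hT l c)).2 ⟨b, Finset.mem_univ b, mul_pos hk hbc⟩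

/-- A shortest-path tree: each `v ≠ j` points along a positive arc to a vertex closer to `j`,
where the distance to `j` is the least `k` with `0 < (T ^ k) v j`. -/
lemma exists_isInTree_forall_pos (hT : ∀ i j, 0 ≤ T i j) (hirr : IsIrreducibleMC T)
    (j : Fin n) : ∃ A, IsInTree A j ∧ ∀ a ∈ A, 0 < T a.1 a.2 := by
  have hex v : ∃ k, 0 < (T ^ k) v j := exists_pow_apply_pos hT (hirr v j).to_reflTransGen
  set d : Fin n → ℕ := fun v => Nat.find (hex v)
  have hnext v : ∃ w, v ≠ j → 0 < T v w ∧ d w < d v := by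
    by_cases hv : v = j
    · exact ⟨v, fun h => absurd hv h⟩
    obtain ⟨k, hk⟩ : ∃ k, d v = k + 1 := Nat.exists_eq_succ_of_ne_zero fun h0 => by
      simpa [d, h0, one_apply_ne hv] using Nat.find_spec (hex v)
    have hpos : 0 < (T ^ (k + 1)) v j := hk ▸ Nat.find_spec (hex v)
    rw [pow_succ', mul_apply] at hpos
    obtain ⟨w, -, hw⟩ := (Finset.sum_pos_iff_of_nonneg fun w _ =>
      mul_nonneg (hT v w) (pow_apply_nonneg hT k w j)).1 hpos
    refine ⟨w, fun _ => ⟨pos_of_mul_pos_left hw (pow_apply_nonneg hT k w j), ?_⟩⟩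
    have hdw : d w ≤ k := Nat.find_min' (hex w) (pos_of_mul_pos_right hw (hT v w))
    omega
  choose f hf using hnext
  refine ⟨Finset.univ.filter fun a => a.1 ≠ j ∧ a.2 = f a.1, ⟨fun v => ?_, fun v => ?_⟩, ?_⟩
  · split_ifs with hv
    · simp [hv]
    · rw [Finset.card_eq_one]
      refine ⟨(v, f v), ?_⟩
      ext ⟨x, y⟩
      simp only [Finset.mem_filter, Finset.mem_univ, true_and, Finset.mem_singleton, Prod.mk.injEq]
      grind
  · induction hdv : d v using Nat.strong_induction_on generalizing v with
    | _ m ih =>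
      rcases eq_or_ne v j with rfl | hv
      · exact .refl
      · have hvf : arcStep (Finset.univ.filter fun a => a.1 ≠ j ∧ a.2 = f a.1) v (f v) := by
          simp [arcStep, hv]
        exact .head hvf (ih _ (hdv ▸ (hf v hv).2) _ rfl)
  · simp only [Finset.mem_filter, Finset.mem_univ, true_and, and_imp, Prod.forall]
    rintro x y hx rfl
    exact (hf x hx).1

end Positivity

lemma treeW_pos {n : ℕ} {T : Matrix (Fin n) (Fin n) ℝ} (hT : ∀ i j, 0 ≤ T i j)
    (hirr : IsIrreducibleMC T) (j : Fin n) : 0 < treeW T j := by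
  obtain ⟨A, hA, hpos⟩ := exists_isInTree_forall_pos hT hirr j
  rw [treeW_eq_sum_isInTree]
  exact Finset.sum_pos' (fun B _ => Finset.prod_nonneg fun a _ => hT a.1 a.2)
    ⟨A, by simpa using hA, Finset.prod_pos fun a ha => hpos a ha⟩

lemma IsStochastic.treeW_vecMul {n : ℕ} {T : Matrix (Fin n) (Fin n) ℝ} (hT : IsStochastic T) :
    (fun i => treeW T i) ᵥ* T = fun i => treeW T i := by
  funext j
  rw [vecMul, dotProduct, sum_treeW_mul_eq, ← treeW_mul_sum_eq, hT.2 j, mul_one]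

section Stationary

variable {n : ℕ} {T : Matrix (Fin n) (Fin n) ℝ}

lemma eq_zero_of_vecMul_eq_self (hT : ∀ i j, 0 ≤ T i j) (hirr : IsIrreducibleMC T)
    {x : Fin n → ℝ} (hx : ∀ i, 0 ≤ x i) (hxT : x ᵥ* T = x) {i₀ : Fin n} (h₀ : x i₀ = 0) :
    x = 0 := by
  have step {a b : Fin n} (hab : 0 < T a b) (hb : x b = 0) : x a = 0 := by
    have hsum : ∑ i, x i * T i b = 0 := (congrFun hxT b).trans hb
    have := (Finset.sum_eq_zero_iff_of_nonneg fun i _ => mul_nonneg (hx i) (hT i b)).mp hsum a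
      (Finset.mem_univ a)
    exact (mul_eq_zero.mp this).resolve_right hab.ne'
  funext k
  induction hirr k i₀ using TransGen.head_induction_on with
  | single h => exact step h h₀
  | head h _ ih => exact step h ih

lemma isStationaryDist_div_sum {x : Fin n → ℝ} (hx : ∀ i, 0 ≤ x i) (hxT : x ᵥ* T = x)
    (hsum : 0 < ∑ i, x i) : IsStationaryDist T fun i => x i / ∑ k, x k := by
  refine ⟨fun i => div_nonneg (hx i) hsum.le, by rw [← Finset.sum_div, div_self hsum.ne'],
    fun j => ?_⟩
  simp_rw [div_mul_eq_mul_div, ← Finset.sum_div]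
  exact congrArg (· / ∑ k, x k) (congrFun hxT j)

/-- Subtracting from `p` the largest multiple of `q` below it leaves a nonnegative invariant vector
with a zero entry, which irreducibility forces to vanish. -/
lemma IsStationaryDist.unique (hT : ∀ i j, 0 ≤ T i j) (hirr : IsIrreducibleMC T)
    {p q : Fin n → ℝ} (hp : IsStationaryDist T p) (hq : IsStationaryDist T q) : p = q := by
  have hpT : p ᵥ* T = p := funext hp.2.2
  have hqT : q ᵥ* T = q := funext hq.2.2
  have hne : (Finset.univ : Finset (Fin n)).Nonempty :=
    Finset.nonempty_of_sum_ne_zero (hq.2.1 ▸ one_ne_zero)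
  have hqpos i : 0 < q i := (hq.1 i).lt_of_ne fun h => by
    simpa [eq_zero_of_vecMul_eq_self hT hirr hq.1 hqT h.symm] using hq.2.1
  obtain ⟨i₀, -, hmin⟩ := Finset.exists_min_image Finset.univ (fun k => p k / q k) hne
  set c := p i₀ / q i₀
  have hx : p - c • q = 0 := by
    refine eq_zero_of_vecMul_eq_self hT hirr (i₀ := i₀) (fun k => ?_) ?_ ?_
    · simpa using (le_div_iff₀ (hqpos k)).mp (hmin k (Finset.mem_univ k))
    · rw [sub_vecMul, smul_vecMul, hpT, hqT]
    · simp [c, div_mul_cancel₀ _ (hqpos i₀).ne']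
  have hpc : p = c • q := sub_eq_zero.mp hx
  have hc : c = 1 := by
    simpa [hpc, ← Finset.mul_sum, hq.2.1] using hp.2.1
  rw [hpc, hc, one_smul]

end Stationary

theorem stmt1_general {n : ℕ} (T : Matrix (Fin n) (Fin n) ℝ)
    (hst : IsStochastic T) (hirr : IsIrreducibleMC T)
    (pi : Fin n → ℝ) (hpi : IsStationaryDist T pi) :
    ∀ j, pi j = treeW T j / ∑ k, treeW T k := by
  intro j
  have hq_pos := treeW_pos hst.1 hirr
  have hsum_pos : 0 < ∑ k, treeW T k :=
    Finset.sum_pos (fun k _ => hq_pos k) ⟨j, Finset.mem_univ j⟩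
  have hρ := isStationaryDist_div_sum (fun k => (hq_pos k).le) hst.treeW_vecMul hsum_pos
  exact congrFun (hpi.unique hst.1 hirr hρ) j

/-- Markov Chain Tree Theorem: the stationary probability of state `j`
equals `q_j / q`, where `q_j` is the total weight of spanning trees converging to `j`. -/
theorem stmt1 {n : ℕ} (hn : 1 ≤ n) (T : Matrix (Fin n) (Fin n) ℝ)
    (hst : IsStochastic T) (hirr : IsIrreducibleMC T)
    (pi : Fin n → ℝ) (hpi : IsStationaryDist T pi) :
    ∀ j, pi j = treeW T j / ∑ k, treeW T k :=
  stmt1_general T hst hirr pi hpi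
end

section
/- For the hitting time defined with p ≥ 0 (so m_ii = 0), the matrix of hitting times satisfies M = (1·q_diag^(n-2) - Q_{n-2})·diag(q_1,...,q_n)^{-1}, i.e., m_ij = (q^(n-2)_jj - q^(n-2)_ij)/q_j for all i, j, where q^(k)_ij is the total weight of in-forests with k arcs in which vertex i belongs to the tree converging to j. -/
open Finset Relation Matrix
open scoped Classical

namespace Forest
variable {n : ℕ} {A B : Finset (Fin n × Fin n)} {i j k v w r : Fin n}

lemma arc_unique (hF : IsInForest A) (h1 : (i,k) ∈ A) (h2 : (i,v) ∈ A) : k = v := by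
  have := Finset.card_le_one.mp (hF.2.1 i) (i,k) (by simp [h1]) (i,v) (by simp [h2])
  exact congrArg Prod.snd this

lemma forest_mono (hsub : A ⊆ B) (hF : IsInForest B) : IsInForest A := by
  refine ⟨fun a ha => hF.1 a (hsub ha), fun v => le_trans (Finset.card_le_card ?_) (hF.2.1 v),
    fun v hv => hF.2.2 v (TransGen.mono (fun x y (hxy : arcStep A x y) => (hsub hxy : arcStep B x y)) v v hv)⟩
  exact Finset.filter_subset_filter _ hsub

lemma reach_mono (hsub : A ⊆ B) (h : ReflTransGen (arcStep A) v w) :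
    ReflTransGen (arcStep B) v w := ReflTransGen.mono (fun x y (hxy : arcStep A x y) => (hsub hxy : arcStep B x y)) v w h

lemma root_reach_eq (hroot : IsRootOf A r) (h : ReflTransGen (arcStep A) r v) : r = v := by
  rcases h.cases_head with h | ⟨c, hc, _⟩
  · exact h
  · exact absurd rfl (hroot _ hc)

/-- chain lemma: out-degree ≤ 1 implies reachable sets from a vertex are chains -/
lemma reach_chain (hF : IsInForest A) (ha : ReflTransGen (arcStep A) v w)
    (hb : ReflTransGen (arcStep A) v r) :
    ReflTransGen (arcStep A) w r ∨ ReflTransGen (arcStep A) r w := by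
  revert hb
  induction ha using Relation.ReflTransGen.head_induction_on with
  | refl => exact fun hb => Or.inl hb
  | @head a c hstep htail ih =>
    intro hb
    rcases hb.cases_head with h | ⟨u', hu', htail'⟩
    · subst h; exact Or.inr (ReflTransGen.head hstep htail)
    · have : c = u' := arc_unique hF (show (a, c) ∈ A from hstep) (show (a, u') ∈ A from hu')
      subst this
      exact ih htail'

lemma root_unique (hF : IsInForest A) (h1 : IsRootOf A r) (h2 : IsRootOf A w)
    (ha : ReflTransGen (arcStep A) v r) (hb : ReflTransGen (arcStep A) v w) : r = w := by
  rcases reach_chain hF ha hb with h | h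
  · exact root_reach_eq h1 h
  · exact (root_reach_eq h2 h).symm

/-- every vertex reaches a root -/
lemma exists_reach_root (hF : IsInForest A) (v : Fin n) :
    ∃ r, IsRootOf A r ∧ ReflTransGen (arcStep A) v r := by
  have hwf : WellFounded (fun x y : Fin n => arcStep A y x) := by
    have hirr : IsIrrefl (Fin n) (TransGen (fun x y : Fin n => arcStep A y x)) := by
      constructor
      intro a ha
      exact hF.2.2 a (Relation.transGen_swap.mp ha)
    have htr : IsTrans (Fin n) (TransGen (fun x y : Fin n => arcStep A y x)) := inferInstance
    exact @Subrelation.wf (Fin n) (TransGen (fun x y : Fin n => arcStep A y x))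
      (fun x y : Fin n => arcStep A y x) (fun h => TransGen.single h)
      (Finite.wellFounded_of_trans_of_irrefl _)
  induction v using WellFounded.induction hwf with
  | _ v ih =>
    by_cases hv : ∃ u, (v, u) ∈ A
    · obtain ⟨u, hu⟩ := hv
      obtain ⟨r, hr, hru⟩ := ih u hu
      exact ⟨r, hr, ReflTransGen.head hu hru⟩
    · push_neg at hv
      refine ⟨v, fun a ha hav => ?_, ReflTransGen.refl⟩
      have h2 : (a.1, a.2) ∈ A := by simpa using ha
      rw [hav] at h2
      exact hv a.2 h2

lemma card_roots (hF : IsInForest A) :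
    (univ.filter fun v : Fin n => IsRootOf A v).card = n - A.card := by
  have himg : (univ.filter fun v : Fin n => ¬ IsRootOf A v) = A.image Prod.fst := by
    ext v
    rw [Finset.mem_filter, Finset.mem_image]
    simp only [Finset.mem_filter, Finset.mem_univ, true_and, Finset.mem_image, IsRootOf]
    push_neg
    constructor
    · rintro ⟨a, ha, h2⟩; exact ⟨a, ha, h2⟩
    · rintro ⟨a, ha, h2⟩; exact ⟨a, ha, h2⟩
  have hinj : Set.InjOn Prod.fst (A : Set (Fin n × Fin n)) := by
    intro a ha b hb hab
    replace ha : a ∈ A := ha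
    replace hb : b ∈ A := hb
    have : a.2 = b.2 := by
      have h1 : (a.1, a.2) ∈ A := by simpa using ha
      have h2 : (a.1, b.2) ∈ A := by rw [hab]; simpa using hb
      exact arc_unique hF h1 h2
    exact Prod.ext hab this
  have hcard : (A.image Prod.fst).card = A.card := Finset.card_image_of_injOn hinj
  have hsplit := Finset.card_filter_add_card_filter_not
    (s := (univ : Finset (Fin n))) (p := fun v => IsRootOf A v)
  rw [himg, hcard] at hsplit
  simp only [Finset.card_univ, Fintype.card_fin] at hsplit
  omega

/-- reachability survives erasing arc (i,k), up to possibly reaching i instead -/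
lemma erase_reach (h : ReflTransGen (arcStep B) v j) :
    ReflTransGen (arcStep (B.erase (i,k))) v j ∨ ReflTransGen (arcStep (B.erase (i,k))) v i := by
  induction h using Relation.ReflTransGen.head_induction_on with
  | refl => exact Or.inl ReflTransGen.refl
  | @head a c hstep htail ih =>
    by_cases hik : (a, c) = (i, k)
    · rcases Prod.mk.injEq .. ▸ hik with ⟨h1, h2⟩
      exact Or.inr (h1 ▸ ReflTransGen.refl)
    · have harc : (a, c) ∈ B.erase (i,k) := Finset.mem_erase.mpr ⟨hik, hstep⟩
      rcases ih with h | h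
      · exact Or.inl (ReflTransGen.head harc h)
      · exact Or.inr (ReflTransGen.head harc h)

/-- decomposition of reachability in `insert (i,k) A` when `i` is a root of `A` -/
lemma insert_decomp (h : ReflTransGen (arcStep (insert (i,k) A)) v w) :
    ReflTransGen (arcStep A) v w ∨
      (ReflTransGen (arcStep A) v i ∧ ReflTransGen (arcStep (insert (i,k) A)) k w) := by
  induction h using Relation.ReflTransGen.head_induction_on with
  | refl => exact Or.inl ReflTransGen.refl
  | @head a c hstep htail ih =>
    by_cases hik : (a, c) = (i, k)
    · rcases Prod.mk.injEq .. ▸ hik with ⟨h1, h2⟩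
      exact Or.inr ⟨h1 ▸ ReflTransGen.refl, h2 ▸ htail⟩
    · have harc : (a, c) ∈ A := by
        rcases Finset.mem_insert.mp hstep with h | h
        · exact absurd h hik
        · exact h
      rcases ih with h | ⟨h1, h2⟩
      · exact Or.inl (ReflTransGen.head harc h)
      · exact Or.inr ⟨ReflTransGen.head harc h1, h2⟩

lemma insert_forest (hF : IsInForest A) (hroot : IsRootOf A i) (hne : i ≠ k)
    (hnr : ¬ ReflTransGen (arcStep A) k i) : IsInForest (insert (i,k) A) := by
  refine ⟨?_, ?_, ?_⟩
  · intro a ha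
    rcases Finset.mem_insert.mp ha with h | h
    · rw [h]; exact hne
    · exact hF.1 a h
  · intro v
    by_cases hv : v = i
    · have hsub : (insert (i,k) A).filter (fun a => a.1 = v) ⊆ {(i,k)} := by
        intro a ha
        rcases Finset.mem_filter.mp ha with ⟨ha1, ha2⟩
        rcases Finset.mem_insert.mp ha1 with h | h
        · simp [h]
        · exact absurd (ha2.trans hv) (hroot a h)
      calc _ ≤ ({(i,k)} : Finset (Fin n × Fin n)).card := Finset.card_le_card hsub
        _ = 1 := Finset.card_singleton _
    · have hne' : ¬ (((i,k) : Fin n × Fin n).1 = v) := fun h => hv h.symm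
      rw [Finset.filter_insert, if_neg hne']
      exact hF.2.1 v
  · intro v hv
    rcases (Relation.TransGen.head'_iff).mp hv with ⟨u, hstep, htail⟩
    by_cases hik : (v, u) = (i, k)
    · rcases Prod.mk.injEq .. ▸ hik with ⟨h1, h2⟩
      subst h1; subst h2
      rcases insert_decomp htail with h | ⟨h1, _⟩
      · exact hnr h
      · exact hnr h1
    · have harc : (v, u) ∈ A := by
        rcases Finset.mem_insert.mp hstep with h | h
        · exact absurd h hik
        · exact h
      rcases insert_decomp htail with h | ⟨h1, h2⟩
      · exact hF.2.2 v (Relation.TransGen.head' harc h)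
      · -- k ⇝_{A'} v, v → u ⇝_A i, so k ⇝_{A'} i, decompose again
        have hvi : ReflTransGen (arcStep A) v i := ReflTransGen.head harc h1
        have hki : ReflTransGen (arcStep (insert (i,k) A)) k i :=
          h2.trans (reach_mono (Finset.subset_insert _ _) hvi)
        rcases insert_decomp hki with h | ⟨h1', _⟩
        · exact hnr h
        · exact hnr h1'

/-- an (n-1)-arc in-forest with root j is a spanning tree: every vertex reaches j -/
lemma spanning_reach (hF : IsInForest A) (hcard : A.card = n - 1) (hroot : IsRootOf A j)
    (hn : 1 ≤ n) : ∀ v, ReflTransGen (arcStep A) v j := by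
  intro v
  obtain ⟨r, hr, hvr⟩ := exists_reach_root hF v
  have hcr := card_roots hF
  rw [hcard] at hcr
  have h1 : n - (n - 1) = 1 := by omega
  rw [h1] at hcr
  have hjmem : j ∈ univ.filter fun v : Fin n => IsRootOf A v := by
    simp [hroot]
  have hrmem : r ∈ univ.filter fun v : Fin n => IsRootOf A v := by
    simp [hr]
  have : r = j := by
    have := Finset.card_le_one.mp (le_of_eq hcr) _ hrmem _ hjmem
    exact this
  exact this ▸ hvr

lemma reach_out_arc (h : ReflTransGen (arcStep A) i j) (hij : i ≠ j) : ∃ u, (i,u) ∈ A := by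
  rcases h.cases_head with h | ⟨u, hu, _⟩
  · exact absurd h hij
  · exact ⟨u, hu⟩

lemma no_cycle_arc (hF : IsInForest A) (h : (i,k) ∈ A) :
    ¬ ReflTransGen (arcStep A) k i := fun hr =>
  hF.2.2 i (Relation.TransGen.head' h hr)

lemma rootfree_not_reach (hroot : IsRootOf A i) (hij : i ≠ j) :
    ¬ ReflTransGen (arcStep A) i j := fun h => by
  rcases h.cases_head with h | ⟨u, hu, _⟩
  · exact hij h
  · exact hroot _ hu rfl

lemma erase_rootfree (hF : IsInForest A) (h : (i,k) ∈ A) : IsRootOf (A.erase (i,k)) i := by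
  intro a ha hai
  rcases Finset.mem_erase.mp ha with ⟨hne, haA⟩
  have h2 : (i, a.2) ∈ A := by
    have : (a.1, a.2) ∈ A := by simpa using haA
    rwa [hai] at this
  have : a.2 = k := arc_unique hF h2 h
  apply hne
  rw [← hai, ← this]

lemma reach_erase_of_not_cycle (hF : IsInForest A) (hik : (i,k) ∈ A)
    (h : ReflTransGen (arcStep A) v j) (hvi : ¬ ReflTransGen (arcStep A) v i) :
    ReflTransGen (arcStep (A.erase (i,k))) v j := by
  rcases erase_reach (i := i) (k := k) h with h' | h'
  · exact h'
  · exact absurd (reach_mono (Finset.erase_subset _ _) h') hvi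

end Forest

namespace Key
open Forest
variable {n : ℕ} (i j : Fin n)

/-- condition for class-X triples `(A, k, k₀)`: `i ⇝ j`, `¬ k ⇝ j`, `(i,k₀) ∈ A` -/
def Xcond (p : Finset (Fin n × Fin n) × Fin n × Fin n) : Prop :=
  IsInForest p.1 ∧ p.1.card = n - 2 ∧ IsRootOf p.1 j ∧
  ReflTransGen (arcStep p.1) i j ∧ ¬ ReflTransGen (arcStep p.1) p.2.1 j ∧ (i, p.2.2) ∈ p.1

/-- condition for class-Y triples `(A, k₀, k)`: `¬ i ⇝ j`, `k₀ ⇝ j`, `(i,k) ∈ A` -/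
def Ycond (p : Finset (Fin n × Fin n) × Fin n × Fin n) : Prop :=
  IsInForest p.1 ∧ p.1.card = n - 2 ∧ IsRootOf p.1 j ∧
  ¬ ReflTransGen (arcStep p.1) i j ∧ ReflTransGen (arcStep p.1) p.2.1 j ∧ (i, p.2.2) ∈ p.1

/-- the arc-swap map -/
def phi (p : Finset (Fin n × Fin n) × Fin n × Fin n) :
    Finset (Fin n × Fin n) × Fin n × Fin n :=
  (insert (i, p.2.1) (p.1.erase (i, p.2.2)), p.2.2, p.2.1)

variable {i j}

lemma xy_fwd (hij : i ≠ j) {p : Finset (Fin n × Fin n) × Fin n × Fin n}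
    (hp : Xcond i j p) : Ycond i j (phi i p) := by
  obtain ⟨A, k, k0⟩ := p
  obtain ⟨hF, hcard, hroot, hRi, hRk, hk0⟩ := hp
  dsimp only [Xcond, Ycond, phi] at *
  set F := A.erase (i, k0) with hFdef
  have hFsub : F ⊆ A := Finset.erase_subset _ _
  have hFforest : IsInForest F := forest_mono hFsub hF
  have hFrooti : IsRootOf F i := erase_rootfree hF hk0
  have hik : i ≠ k := fun h => hRk (h ▸ hRi)
  have hkFi : ¬ ReflTransGen (arcStep F) k i := fun h =>
    hRk ((reach_mono hFsub h).trans hRi)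
  have hforest' : IsInForest (insert (i,k) F) := insert_forest hFforest hFrooti hik hkFi
  have hknotF : (i,k) ∉ F := fun h => hFrooti _ h rfl
  -- k₀ reaches j in F
  have hk0A : ReflTransGen (arcStep A) k0 j := by
    rcases hRi.cases_head with h | ⟨u, hu, htail⟩
    · exact absurd h hij
    · have : u = k0 := arc_unique hF hu hk0
      exact this ▸ htail
  have hk0Ai : ¬ ReflTransGen (arcStep A) k0 i := no_cycle_arc hF hk0
  have hk0F : ReflTransGen (arcStep F) k0 j := reach_erase_of_not_cycle hF hk0 hk0A hk0Ai
  refine ⟨hforest', ?_, ?_, ?_, ?_, ?_⟩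
  · rw [Finset.card_insert_of_notMem hknotF, hFdef, Finset.card_erase_of_mem hk0]
    have : 1 ≤ A.card := Finset.card_pos.mpr ⟨_, hk0⟩
    omega
  · intro a ha haj
    rcases Finset.mem_insert.mp ha with h | h
    · rw [h] at haj; exact hij haj
    · exact hroot a (hFsub h) haj
  · -- ¬ i ⇝ j in insert (i,k) F
    intro hreach
    rcases hreach.cases_head with h | ⟨u, hu, htail⟩
    · exact hij h
    · have hu' : u = k := by
        rcases Finset.mem_insert.mp hu with h | h
        · exact congrArg Prod.snd h
        · exact absurd h (fun hh => hFrooti _ hh rfl)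
      subst hu'
      rcases insert_decomp htail with h | ⟨h1, _⟩
      · exact hRk (reach_mono hFsub h)
      · exact hkFi h1
  · exact reach_mono (Finset.subset_insert _ _) hk0F
  · exact Finset.mem_insert_self _ _

lemma yx_fwd (hij : i ≠ j) {p : Finset (Fin n × Fin n) × Fin n × Fin n}
    (hp : Ycond i j p) : Xcond i j (phi i p) := by
  obtain ⟨A, k0, k⟩ := p
  obtain ⟨hF, hcard, hroot, hRi, hRk0, hk⟩ := hp
  dsimp only [Xcond, Ycond, phi] at *
  set F := A.erase (i, k) with hFdef
  have hFsub : F ⊆ A := Finset.erase_subset _ _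
  have hFforest : IsInForest F := forest_mono hFsub hF
  have hFrooti : IsRootOf F i := erase_rootfree hF hk
  have hknotF : (i,k0) ∉ F := fun h => hFrooti _ h rfl
  have hik0 : i ≠ k0 := fun h => hRi (h ▸ hRk0)
  have hk0Ai : ¬ ReflTransGen (arcStep A) k0 i := by
    intro h
    rcases reach_chain hF h hRk0 with h' | h'
    · exact hRi h'
    · exact hij (root_reach_eq hroot h').symm
  have hk0F : ReflTransGen (arcStep F) k0 j := reach_erase_of_not_cycle hF hk hRk0 hk0Ai
  have hk0Fi : ¬ ReflTransGen (arcStep F) k0 i := fun h => hk0Ai (reach_mono hFsub h)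
  have hforest' : IsInForest (insert (i,k0) F) := insert_forest hFforest hFrooti hik0 hk0Fi
  have hRkA : ¬ ReflTransGen (arcStep A) k j := fun h =>
    hRi (ReflTransGen.head hk h)
  refine ⟨hforest', ?_, ?_, ?_, ?_, ?_⟩
  · rw [Finset.card_insert_of_notMem hknotF, hFdef, Finset.card_erase_of_mem hk]
    have : 1 ≤ A.card := Finset.card_pos.mpr ⟨_, hk⟩
    omega
  · intro a ha haj
    rcases Finset.mem_insert.mp ha with h | h
    · rw [h] at haj; exact hij haj
    · exact hroot a (hFsub h) haj
  · exact ReflTransGen.head (Finset.mem_insert_self _ _)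
      (reach_mono (Finset.subset_insert _ _) hk0F)
  · intro hreach
    rcases insert_decomp hreach with h | ⟨h1, _⟩
    · exact hRkA (reach_mono hFsub h)
    · exact no_cycle_arc hF hk (reach_mono hFsub h1)
  · exact Finset.mem_insert_self _ _

lemma phi_invol {p : Finset (Fin n × Fin n) × Fin n × Fin n}
    (hmem : (i, p.2.2) ∈ p.1) (hroot2 : IsRootOf (p.1.erase (i, p.2.2)) i) :
    phi i (phi i p) = p := by
  obtain ⟨A, k, k0⟩ := p
  dsimp only [phi] at *
  have h1 : (i,k) ∉ A.erase (i,k0) := fun h => hroot2 _ h rfl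
  rw [Finset.erase_insert h1, Finset.insert_erase hmem]

lemma phi_weight {T : Matrix (Fin n) (Fin n) ℝ} {p : Finset (Fin n × Fin n) × Fin n × Fin n}
    (hmem : (i, p.2.2) ∈ p.1) (hnot : (i, p.2.1) ∉ p.1.erase (i, p.2.2)) :
    T i p.2.1 * digraphWeight T p.1 = T i (phi i p).2.1 * digraphWeight T (phi i p).1 := by
  obtain ⟨A, k, k0⟩ := p
  dsimp only [phi] at *
  unfold digraphWeight
  rw [Finset.prod_insert hnot, ← Finset.mul_prod_erase A _ hmem]
  ring

variable (i j) in
/-- condition for class-R pairs `(A,k)`: `i` is a free root, `k ⇝ j` -/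
def Rcond (p : Finset (Fin n × Fin n) × Fin n) : Prop :=
  IsInForest p.1 ∧ p.1.card = n - 2 ∧ IsRootOf p.1 j ∧ IsRootOf p.1 i ∧
  ¬ ReflTransGen (arcStep p.1) i j ∧ ReflTransGen (arcStep p.1) p.2 j

variable (i j) in
/-- condition for spanning-tree pairs `(B,k)`: `B` spanning tree to `j`, `(i,k) ∈ B` -/
def Dcond (p : Finset (Fin n × Fin n) × Fin n) : Prop :=
  IsInForest p.1 ∧ p.1.card = n - 1 ∧ IsRootOf p.1 j ∧ (i, p.2) ∈ p.1

variable (i) in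
def ins (p : Finset (Fin n × Fin n) × Fin n) : Finset (Fin n × Fin n) × Fin n :=
  (insert (i, p.2) p.1, p.2)

variable (i) in
def ers (p : Finset (Fin n × Fin n) × Fin n) : Finset (Fin n × Fin n) × Fin n :=
  (p.1.erase (i, p.2), p.2)

lemma r_fwd (hn : 2 ≤ n) (hij : i ≠ j) {p : Finset (Fin n × Fin n) × Fin n}
    (hp : Rcond i j p) : Dcond i j (ins i p) := by
  obtain ⟨A, k⟩ := p
  obtain ⟨hF, hcard, hroot, hrooti, hRi, hRk⟩ := hp
  dsimp only [Rcond, Dcond, ins] at *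
  have hik : i ≠ k := fun h => hRi (h ▸ hRk)
  have hki : ¬ ReflTransGen (arcStep A) k i := by
    intro h
    rcases reach_chain hF h hRk with h' | h'
    · exact hRi h'
    · exact hij (root_reach_eq hroot h').symm
  have hnotmem : (i,k) ∉ A := fun h => hrooti _ h rfl
  refine ⟨insert_forest hF hrooti hik hki, ?_, ?_, Finset.mem_insert_self _ _⟩
  · rw [Finset.card_insert_of_notMem hnotmem, hcard]; omega
  · intro a ha haj
    rcases Finset.mem_insert.mp ha with h | h
    · rw [h] at haj; exact hij haj
    · exact hroot a h haj

lemma r_bwd (hn : 2 ≤ n) (hij : i ≠ j) {p : Finset (Fin n × Fin n) × Fin n}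
    (hp : Dcond i j p) : Rcond i j (ers i p) := by
  obtain ⟨B, k⟩ := p
  obtain ⟨hF, hcard, hroot, hmem⟩ := hp
  dsimp only [Rcond, Dcond, ers] at *
  have hsub : B.erase (i,k) ⊆ B := Finset.erase_subset _ _
  have hrooti : IsRootOf (B.erase (i,k)) i := erase_rootfree hF hmem
  refine ⟨forest_mono hsub hF, ?_, fun a ha => hroot a (hsub ha), hrooti,
    rootfree_not_reach hrooti hij, ?_⟩
  · rw [Finset.card_erase_of_mem hmem, hcard]; omega
  · have hkj : ReflTransGen (arcStep B) k j := spanning_reach hF hcard hroot (by omega) k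
    exact reach_erase_of_not_cycle hF hmem hkj (no_cycle_arc hF hmem)

section Sums
variable {T : Matrix (Fin n) (Fin n) ℝ}

lemma sum_out {A : Finset (Fin n × Fin n)} {i k1 : Fin n} (hF : IsInForest A)
    (hex : (i,k1) ∈ A) (c : ℝ) : ∑ u, (if (i,u) ∈ A then c else 0) = c := by
  have hset : (univ.filter fun u : Fin n => (i,u) ∈ A) = {k1} := by
    ext u
    simp only [Finset.mem_filter, Finset.mem_univ, true_and, Finset.mem_singleton]
    exact ⟨fun h => arc_unique hF h hex, fun h => h ▸ hex⟩
  rw [← Finset.sum_filter, hset, Finset.sum_singleton]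

lemma ite_iff {p q : Prop} {dp : Decidable p} {dq : Decidable q} (h : p ↔ q) (c : ℝ) :
    (@ite ℝ p dp c 0) = (@ite ℝ q dq c 0) := by
  by_cases hp : p
  · rw [if_pos hp, if_pos (h.mp hp)]
  · rw [if_neg hp, if_neg fun hq => hp (h.mpr hq)]

lemma qF_eq (v : Fin n) (m : ℕ) : qF T m v j =
    ∑ A : Finset (Fin n × Fin n), if (IsInForest A ∧ A.card = m ∧ IsRootOf A j) ∧
      ReflTransGen (arcStep A) v j then digraphWeight T A else 0 := by
  unfold qF forestWeight
  refine Finset.sum_congr rfl fun A _ => ?_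
  refine ite_iff ?_ _
  unfold InTreeOf
  tauto

/-- the main combinatorial identity -/
lemma key (hn : 2 ≤ n) (hst : IsStochastic T) (hij : i ≠ j) :
    ∑ k, T i k * qF T (n-2) k j = qF T (n-2) i j + treeW T j := by
  classical
  set w : Finset (Fin n × Fin n) → ℝ := digraphWeight T with hw
  set C : Finset (Fin n × Fin n) → Prop :=
    fun A => IsInForest A ∧ A.card = n - 2 ∧ IsRootOf A j with hC
  set R : Finset (Fin n × Fin n) → Fin n → Prop :=
    fun A v => ReflTransGen (arcStep A) v j with hR
  -- Step 2 : LHS as double sum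
  have step2 : ∑ k, T i k * qF T (n-2) k j =
      ∑ A : Finset (Fin n × Fin n), ∑ k, if C A ∧ R A k then T i k * w A else 0 := by
    rw [Finset.sum_comm]
    refine Finset.sum_congr rfl fun k _ => ?_
    rw [qF_eq k (n-2), Finset.mul_sum]
    refine Finset.sum_congr rfl fun A _ => ?_
    rw [mul_ite, mul_zero]
  -- Step 3 : qF i j as double sum
  have step3 : qF T (n-2) i j =
      ∑ A : Finset (Fin n × Fin n), ∑ k, if C A ∧ R A i then T i k * w A else 0 := by
    rw [qF_eq i (n-2)]
    refine Finset.sum_congr rfl fun A _ => ?_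
    by_cases hc : C A ∧ R A i
    · have hc' : (IsInForest A ∧ A.card = n - 2 ∧ IsRootOf A j) ∧ ReflTransGen (arcStep A) i j := hc
      simp only [if_pos hc, ← Finset.sum_mul, hst.2 i, one_mul, if_pos hc', hw]
    · have hc' : ¬((IsInForest A ∧ A.card = n - 2 ∧ IsRootOf A j) ∧ ReflTransGen (arcStep A) i j) := hc
      simp only [if_neg hc, Finset.sum_const_zero, if_neg hc']
  -- class sums
  set SX : ℝ := ∑ A : Finset (Fin n × Fin n), ∑ k,
    if C A ∧ R A i ∧ ¬ R A k then T i k * w A else 0 with hSX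
  set SY : ℝ := ∑ A : Finset (Fin n × Fin n), ∑ k,
    if C A ∧ ¬ R A i ∧ ¬ IsRootOf A i ∧ R A k then T i k * w A else 0 with hSY
  set SR : ℝ := ∑ A : Finset (Fin n × Fin n), ∑ k,
    if C A ∧ IsRootOf A i ∧ ¬ R A i ∧ R A k then T i k * w A else 0 with hSR
  -- Step 4 : pointwise decomposition
  have step4 : ∑ A : Finset (Fin n × Fin n), ∑ k, (if C A ∧ R A k then T i k * w A else 0) =
      (∑ A : Finset (Fin n × Fin n), ∑ k, if C A ∧ R A i then T i k * w A else 0)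
      + SR + (SY - SX) := by
    rw [hSX, hSY, hSR, ← Finset.sum_sub_distrib, ← Finset.sum_add_distrib,
      ← Finset.sum_add_distrib]
    refine Finset.sum_congr rfl fun A _ => ?_
    rw [← Finset.sum_sub_distrib, ← Finset.sum_add_distrib, ← Finset.sum_add_distrib]
    refine Finset.sum_congr rfl fun k _ => ?_
    by_cases hc : C A
    · by_cases h1 : R A i <;> by_cases h2 : R A k <;> by_cases h3 : IsRootOf A i <;>
        simp [hc, h1, h2, h3]
    · simp [hc]
  -- Step 5 : SX = SY via the triple bijection
  have hXt : SX = ∑ p : Finset (Fin n × Fin n) × Fin n × Fin n,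
      if Xcond i j p then T i p.2.1 * w p.1 else 0 := by
    rw [Fintype.sum_prod_type, hSX]
    refine Finset.sum_congr rfl fun A _ => ?_
    rw [Fintype.sum_prod_type]
    refine Finset.sum_congr rfl fun k _ => ?_
    by_cases hc : C A ∧ R A i ∧ ¬ R A k
    · rw [if_pos hc]
      obtain ⟨k1, hk1⟩ := reach_out_arc hc.2.1 hij
      rw [← sum_out hc.1.1 hk1 (T i k * w A)]
      refine Finset.sum_congr rfl fun k0 _ => ?_
      refine ite_iff ?_ _
      constructor
      · intro h; exact ⟨hc.1.1, hc.1.2.1, hc.1.2.2, hc.2.1, hc.2.2, h⟩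
      · intro h; exact h.2.2.2.2.2
    · rw [if_neg hc]
      refine (Finset.sum_eq_zero fun k0 _ => ?_).symm
      refine if_neg fun h => hc ⟨⟨h.1, h.2.1, h.2.2.1⟩, h.2.2.2.1, h.2.2.2.2.1⟩
  have hYt : SY = ∑ p : Finset (Fin n × Fin n) × Fin n × Fin n,
      if Ycond i j p then T i p.2.1 * w p.1 else 0 := by
    rw [Fintype.sum_prod_type, hSY]
    refine Finset.sum_congr rfl fun A _ => ?_
    rw [Fintype.sum_prod_type]
    refine Finset.sum_congr rfl fun k _ => ?_
    by_cases hc : C A ∧ ¬ R A i ∧ ¬ IsRootOf A i ∧ R A k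
    · rw [if_pos hc]
      have hex : ∃ k1, (i, k1) ∈ A := by
        have h3 := hc.2.2.1
        unfold IsRootOf at h3
        push_neg at h3
        obtain ⟨a, haA, hai⟩ := h3
        refine ⟨a.2, ?_⟩
        have h4 : (a.1, a.2) ∈ A := by simpa using haA
        rwa [hai] at h4
      obtain ⟨k1, hk1⟩ := hex
      rw [← sum_out hc.1.1 hk1 (T i k * w A)]
      refine Finset.sum_congr rfl fun k0 _ => ?_
      refine ite_iff ?_ _
      constructor
      · intro h; exact ⟨hc.1.1, hc.1.2.1, hc.1.2.2, hc.2.1, hc.2.2.2, h⟩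
      · intro h; exact h.2.2.2.2.2
    · rw [if_neg hc]
      refine (Finset.sum_eq_zero fun k0 _ => ?_).symm
      refine if_neg fun h => ?_
      refine hc ⟨⟨h.1, h.2.1, h.2.2.1⟩, h.2.2.2.1, ?_, h.2.2.2.2.1⟩
      intro hri
      exact hri _ h.2.2.2.2.2 rfl
  have hSXY : SX = SY := by
    rw [hXt, hYt, ← Finset.sum_filter, ← Finset.sum_filter]
    refine Finset.sum_nbij' (phi i) (phi i) ?_ ?_ ?_ ?_ ?_
    · intro p hp
      rw [Finset.mem_filter] at hp ⊢
      exact ⟨Finset.mem_univ _, xy_fwd hij hp.2⟩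
    · intro p hp
      rw [Finset.mem_filter] at hp ⊢
      exact ⟨Finset.mem_univ _, yx_fwd hij hp.2⟩
    · intro p hp
      rw [Finset.mem_filter] at hp
      obtain ⟨hF, -, -, -, -, hmem⟩ := hp.2
      exact phi_invol hmem (erase_rootfree hF hmem)
    · intro p hp
      rw [Finset.mem_filter] at hp
      obtain ⟨hF, -, -, -, -, hmem⟩ := hp.2
      exact phi_invol hmem (erase_rootfree hF hmem)
    · intro p hp
      rw [Finset.mem_filter] at hp
      obtain ⟨hF, -, -, -, -, hmem⟩ := hp.2
      exact phi_weight hmem (fun h => erase_rootfree hF hmem _ h rfl)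
  -- Step 6 : SR = treeW
  have hSRt : SR = treeW T j := by
    have h1 : treeW T j = ∑ B : Finset (Fin n × Fin n),
        if IsInForest B ∧ B.card = n - 1 ∧ IsRootOf B j then w B else 0 := by
      unfold treeW
      rw [qF_eq j (n-1)]
      refine Finset.sum_congr rfl fun B _ => ?_
      refine ite_iff ?_ _
      constructor
      · intro h; exact h.1
      · intro h; exact ⟨h, ReflTransGen.refl⟩
    have h2 : treeW T j = ∑ p : Finset (Fin n × Fin n) × Fin n,
        if Dcond i j p then w p.1 else 0 := by
      rw [h1, Fintype.sum_prod_type]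
      refine Finset.sum_congr rfl fun B _ => ?_
      by_cases hc : IsInForest B ∧ B.card = n - 1 ∧ IsRootOf B j
      · rw [if_pos hc]
        have hrij : ReflTransGen (arcStep B) i j :=
          spanning_reach hc.1 hc.2.1 hc.2.2 (by omega) i
        obtain ⟨k1, hk1⟩ := reach_out_arc hrij hij
        rw [← sum_out hc.1 hk1 (w B)]
        refine Finset.sum_congr rfl fun k0 _ => ?_
        refine ite_iff ?_ _
        constructor
        · intro h; exact ⟨hc.1, hc.2.1, hc.2.2, h⟩
        · intro h; exact h.2.2.2

      · rw [if_neg hc]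
        refine (Finset.sum_eq_zero fun k0 _ => ?_).symm
        refine if_neg fun h => hc ⟨h.1, h.2.1, h.2.2.1⟩
    have h3 : SR = ∑ p : Finset (Fin n × Fin n) × Fin n,
        if Rcond i j p then T i p.2 * w p.1 else 0 := by
      rw [Fintype.sum_prod_type, hSR]
      refine Finset.sum_congr rfl fun A _ => ?_
      refine Finset.sum_congr rfl fun k _ => ?_
      refine ite_iff ?_ _
      unfold Rcond
      tauto
    rw [h2, h3, ← Finset.sum_filter, ← Finset.sum_filter]
    refine Finset.sum_nbij' (ins i) (ers i) ?_ ?_ ?_ ?_ ?_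
    · intro p hp
      rw [Finset.mem_filter] at hp ⊢
      exact ⟨Finset.mem_univ _, r_fwd hn hij hp.2⟩
    · intro p hp
      rw [Finset.mem_filter] at hp ⊢
      exact ⟨Finset.mem_univ _, r_bwd hn hij hp.2⟩
    · intro p hp
      rw [Finset.mem_filter] at hp
      obtain ⟨-, -, -, hri, -, -⟩ := hp.2
      have hnm : (i, p.2) ∉ p.1 := fun h => hri _ h rfl
      unfold ins ers
      rw [Finset.erase_insert hnm]
    · intro p hp
      rw [Finset.mem_filter] at hp
      obtain ⟨-, -, -, hmem⟩ := hp.2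
      unfold ins ers
      rw [Finset.insert_erase hmem]
    · intro p hp
      rw [Finset.mem_filter] at hp
      obtain ⟨-, -, -, hri, -, -⟩ := hp.2
      have hnm : (i, p.2) ∉ p.1 := fun h => hri _ h rfl
      unfold ins
      show T i p.2 * w p.1 = w (insert (i, p.2) p.1)
      rw [hw]
      unfold digraphWeight
      rw [Finset.prod_insert hnm]
  rw [step2, step4, ← step3, hSXY, hSRt]
  ring
end Sums
end Key

namespace Main
open Forest Key
variable {n : ℕ} {T : Matrix (Fin n) (Fin n) ℝ}

lemma crossing (hirr : IsIrreducibleMC T) {S : Finset (Fin n)} {j : Fin n}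
    (hj : j ∈ S) (hne : S ≠ univ) : ∃ u v, u ∉ S ∧ v ∈ S ∧ 0 < T u v := by
  have hx : ∃ x, x ∉ S := by
    by_contra h
    push_neg at h
    exact hne (Finset.eq_univ_iff_forall.mpr h)
  obtain ⟨u0, hu0⟩ := hx
  have aux : ∀ y, Relation.TransGen (fun a b => 0 < T a b) u0 y → y ∈ S →
      ∃ u v, u ∉ S ∧ v ∈ S ∧ 0 < T u v := by
    intro y hy
    induction hy with
    | single h => exact fun hyS => ⟨u0, _, hu0, hyS, h⟩
    | tail hht h ih =>
      rename_i b c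
      intro hcS
      by_cases hb : b ∈ S
      · exact ih hb
      · exact ⟨b, c, hb, hcS, h⟩
  exact aux j (hirr u0 j) hj

lemma tree_pos (hn : 1 ≤ n) (hst : IsStochastic T) (hirr : IsIrreducibleMC T) (j : Fin n) :
    0 < treeW T j := by
  classical
  -- build a spanning in-tree of positive weight
  have main : ∀ t : ℕ, t ≤ n - 1 → ∃ S : Finset (Fin n), ∃ A : Finset (Fin n × Fin n),
      j ∈ S ∧ S.card = t + 1 ∧ IsInForest A ∧
      (∀ a ∈ A, a.1 ∈ S ∧ a.2 ∈ S ∧ a.1 ≠ j ∧ 0 < T a.1 a.2) ∧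
      (∀ v ∈ S, ReflTransGen (arcStep A) v j) ∧ A.card + 1 = S.card := by
    intro t
    induction t with
    | zero =>
      intro _
      refine ⟨{j}, ∅, Finset.mem_singleton_self j, by simp, ?_, by simp, ?_, by simp⟩
      · refine ⟨fun a ha => absurd ha (Finset.notMem_empty a), fun v => by simp, fun v hv => ?_⟩
        obtain ⟨u, hu, -⟩ := Relation.TransGen.head'_iff.mp hv
        exact absurd hu (Finset.notMem_empty _)
      · intro v hv
        rw [Finset.mem_singleton.mp hv]
    | succ t ih =>
      intro ht
      obtain ⟨S, A, hjS, hScard, hF, harcs, hreach, hAcard⟩ := ih (by omega)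
      have hSne : S ≠ univ := by
        intro h
        rw [h, Finset.card_univ, Fintype.card_fin] at hScard
        omega
      obtain ⟨u, v, huS, hvS, huv⟩ := crossing hirr hjS hSne
      have hrootu : IsRootOf A u := fun a ha hau => huS (hau ▸ (harcs a ha).1)
      have hnotreach : ¬ ReflTransGen (arcStep A) v u := by
        intro h
        rcases h.cases_tail with h | ⟨b, hb, harc⟩
        · exact huS (h ▸ hvS)
        · exact huS (harcs _ harc).2.1
      have hune : u ≠ v := fun h => huS (h ▸ hvS)
      have hmemA : (u,v) ∉ A := fun h => huS (harcs _ h).1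
      refine ⟨insert u S, insert (u,v) A, Finset.mem_insert_of_mem hjS,
        by rw [Finset.card_insert_of_notMem huS, hScard], insert_forest hF hrootu hune hnotreach,
        ?_, ?_, ?_⟩
      · intro a ha
        rcases Finset.mem_insert.mp ha with h | h
        · subst h
          exact ⟨Finset.mem_insert_self _ _, Finset.mem_insert_of_mem hvS,
            fun h => huS (by cases (show u = j from h); exact hjS), huv⟩
        · obtain ⟨h1, h2, h3, h4⟩ := harcs a h
          exact ⟨Finset.mem_insert_of_mem h1, Finset.mem_insert_of_mem h2, h3, h4⟩
      · intro x hx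
        rcases Finset.mem_insert.mp hx with h | h
        · subst h
          exact ReflTransGen.head (Finset.mem_insert_self _ _)
            (reach_mono (Finset.subset_insert _ _) (hreach v hvS))
        · exact reach_mono (Finset.subset_insert _ _) (hreach x h)
      · rw [Finset.card_insert_of_notMem hmemA, Finset.card_insert_of_notMem huS]
        omega
  obtain ⟨S, A, hjS, hScard, hF, harcs, hreach, hAcard⟩ := main (n-1) le_rfl
  have hSuniv : S = univ := by
    apply Finset.eq_univ_of_card
    rw [hScard, Fintype.card_fin]
    omega
  have hAn : A.card = n - 1 := by omega
  have hroot : IsRootOf A j := fun a ha => (harcs a ha).2.2.1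
  have hterm : 0 < digraphWeight T A := Finset.prod_pos fun a _ => (harcs a (by assumption)).2.2.2
  have hle : digraphWeight T A ≤ treeW T j := by
    have hsums : ∑ B : Finset (Fin n × Fin n),
        (if IsInForest B ∧ (B.card = n-1 ∧ InTreeOf B j j) then digraphWeight T B else 0)
        = treeW T j := by
      unfold treeW qF forestWeight
      exact Finset.sum_congr rfl fun B _ => ite_iff Iff.rfl _
    have heq : (if IsInForest A ∧ (A.card = n-1 ∧ InTreeOf A j j) then digraphWeight T A else 0)
        = digraphWeight T A := if_pos ⟨hF, hAn, hroot, ReflTransGen.refl⟩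
    rw [← hsums, ← heq]
    refine Finset.single_le_sum (f := fun B : Finset (Fin n × Fin n) =>
      if IsInForest B ∧ (B.card = n-1 ∧ InTreeOf B j j) then digraphWeight T B else 0)
      (fun B _ => ?_) (Finset.mem_univ A)
    by_cases hB : IsInForest B ∧ (B.card = n-1 ∧ InTreeOf B j j)
    · rw [if_pos hB]
      exact Finset.prod_nonneg fun a _ => hst.1 _ _
    · rw [if_neg hB]
  linarith

lemma max_prin (hst : IsStochastic T) (hirr : IsIrreducibleMC T) {j : Fin n}
    {d : Fin n → ℝ} (hdj : d j = 0) (hd : ∀ v, v ≠ j → d v = ∑ k, T v k * d k) :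
    ∀ v, d v ≤ 0 := by
  obtain ⟨i0, -, hmax⟩ := Finset.exists_max_image univ d ⟨j, Finset.mem_univ j⟩
  set c := d i0 with hc
  intro v
  by_contra hpos
  push_neg at hpos
  have hcpos : 0 < c := lt_of_lt_of_le hpos (hmax v (Finset.mem_univ v))
  have step : ∀ x, d x = c → ∀ k, 0 < T x k → d k = c := by
    intro x hx k hk
    have hxj : x ≠ j := fun h => by rw [h, hdj] at hx; exact absurd hx.symm (ne_of_gt hcpos)
    have hsum : ∑ l, T x l * (c - d l) = 0 := by
      have h1 : ∑ l, T x l * (c - d l) = (∑ l, T x l) * c - ∑ l, T x l * d l := by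
        rw [Finset.sum_mul]
        rw [← Finset.sum_sub_distrib]
        exact Finset.sum_congr rfl fun l _ => by ring
      rw [h1, hst.2 x, one_mul, ← hd x hxj, hx]
      ring
    have hzero := (Finset.sum_eq_zero_iff_of_nonneg (fun l _ =>
      mul_nonneg (hst.1 x l) (sub_nonneg.mpr (hmax l (Finset.mem_univ l))))).mp hsum
    have := hzero k (Finset.mem_univ k)
    have h2 : c - d k = 0 := by
      rcases mul_eq_zero.mp this with h | h
      · exact absurd h (ne_of_gt hk)
      · exact h
    linarith
  have aux : ∀ y, Relation.TransGen (fun a b => 0 < T a b) i0 y → d y = c := by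
    intro y hy
    induction hy with
    | single h => exact step i0 rfl _ h
    | tail hht h ih => exact step _ ih _ h
  have hdjc : d j = c := aux j (hirr i0 j)
  rw [hdj] at hdjc
  exact absurd hdjc.symm (ne_of_gt hcpos)

end Main

/-- for the hitting times with `m i i = 0`,
`m_ij = (q^(n-2)_jj - q^(n-2)_ij)/q_j` for all `i`, `j`. -/
theorem stmt3 {n : ℕ} (hn : 2 ≤ n) (T : Matrix (Fin n) (Fin n) ℝ)
    (hst : IsStochastic T) (hirr : IsIrreducibleMC T)
    (m : Fin n → Fin n → ℝ) (hm : IsHittingTime T m) :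
    ∀ i j, m i j = (qF T (n - 2) j j - qF T (n - 2) i j) / treeW T j := by
  intro i j
  classical
  have hq : 0 < treeW T j := Main.tree_pos (by omega) hst hirr j
  have hqne : treeW T j ≠ 0 := ne_of_gt hq
  set f : Fin n → ℝ := fun v => m v j - (qF T (n-2) j j - qF T (n-2) v j) / treeW T j with hf
  have hfj : f j = 0 := by
    simp only [hf, hm.1 j, sub_self, zero_div, sub_zero]
  have hstep : ∀ v, v ≠ j → f v = ∑ k, T v k * f k := by
    intro v hv
    have hkey : ∑ k, T v k * qF T (n-2) k j = qF T (n-2) v j + treeW T j :=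
      Key.key hn hst hv
    have hrow := hst.2 v
    have e1 : ∑ k, T v k * f k = (∑ k, T v k * m k j)
        - ((∑ k, T v k) * qF T (n-2) j j) / treeW T j
        + (∑ k, T v k * qF T (n-2) k j) / treeW T j := by
      rw [Finset.sum_mul, Finset.sum_div, Finset.sum_div, ← Finset.sum_sub_distrib,
        ← Finset.sum_add_distrib]
      refine Finset.sum_congr rfl fun k _ => ?_
      simp only [hf]
      field_simp
      ring
    rw [e1, hrow, hkey]
    simp only [hf]
    rw [hm.2 v j hv]
    field_simp
    ring
  have h1 : ∀ v, f v ≤ 0 := Main.max_prin hst hirr hfj hstep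
  have h2 : ∀ v, - f v ≤ 0 := by
    refine Main.max_prin (j := j) (d := fun v => - f v) hst hirr (by simp [hfj]) ?_
    intro v hv
    simp only [hstep v hv, ← Finset.sum_neg_distrib]
    refine Finset.sum_congr rfl fun k _ => by ring
  have hfv : f i = 0 := le_antisymm (h1 i) (by linarith [h2 i])
  have := hfv
  rw [hf] at this
  simp only at this
  linarith [this]
end

section
/- The matrices Q_k of forest weights satisfy the recurrence Q_0 = I, σ_0 = 1, σ_{k+1} = tr(L·Q_k)/(k+1), and Q_{k+1} = -L·Q_k + σ_{k+1}·I, where σ_k is the total weight of in-forests with k arcs and L is the Laplacian matrix of the weighted digraph. -/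
open Finset Relation Matrix
open scoped Classical

section Helpers

variable {n : ℕ}

lemma arc_det {A : Finset (Fin n × Fin n)} (hA : IsInForest A) {v x y : Fin n}
    (hx : (v, x) ∈ A) (hy : (v, y) ∈ A) : x = y := by
  have h := hA.2.1 v
  have hx' : ((v, x) : Fin n × Fin n) ∈ A.filter (fun a => a.1 = v) := by
    simp [Finset.mem_filter, hx]
  have hy' : ((v, y) : Fin n × Fin n) ∈ A.filter (fun a => a.1 = v) := by
    simp [Finset.mem_filter, hy]
  have := Finset.card_le_one.mp h _ hx' _ hy'
  exact congrArg Prod.snd this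

lemma rtg_mono {A B : Finset (Fin n × Fin n)} (h : A ⊆ B) {x y : Fin n}
    (hr : Relation.ReflTransGen (arcStep A) x y) : Relation.ReflTransGen (arcStep B) x y :=
  by induction hr with
  | refl => exact .refl
  | tail _ hbc ih => exact ih.tail (h hbc)

lemma forest_subset {A B : Finset (Fin n × Fin n)} (h : B ⊆ A) (hA : IsInForest A) :
    IsInForest B := by
  refine ⟨fun a ha => hA.1 a (h ha), fun v => ?_, fun v hv => hA.2.2 v ?_⟩
  · exact le_trans (Finset.card_le_card (Finset.filter_subset_filter _ h)) (hA.2.1 v)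
  · have key : ∀ a b, Relation.TransGen (arcStep B) a b → Relation.TransGen (arcStep A) a b := by
      intro a b hab
      induction hab with
      | single hab => exact .single (h hab)
      | tail _ hbc ih => exact ih.tail (h hbc)
    exact key _ _ hv

lemma no_rtg_back {A : Finset (Fin n × Fin n)} (hA : IsInForest A) {i t : Fin n}
    (h : (i, t) ∈ A) : ¬ Relation.ReflTransGen (arcStep A) t i :=
  fun hr => hA.2.2 i (Relation.TransGen.head' h hr)

lemma root_rtg {A : Finset (Fin n × Fin n)} {i j : Fin n} (h : IsRootOf A i)
    (hr : Relation.ReflTransGen (arcStep A) i j) : i = j := by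
  rcases hr.cases_head with he | ⟨c, hc, _⟩
  · exact he
  · exact absurd rfl (h _ hc)

lemma rtg_insert {B : Finset (Fin n × Fin n)} {i t x y : Fin n}
    (h : Relation.ReflTransGen (arcStep (insert (i, t) B)) x y) :
    Relation.ReflTransGen (arcStep B) x y ∨ Relation.ReflTransGen (arcStep B) x i := by
  induction h using Relation.ReflTransGen.head_induction_on with
  | refl => exact Or.inl .refl
  | head hab hbc ih =>
    rcases Finset.mem_insert.mp hab with he | hm
    · obtain ⟨h1, h2⟩ := Prod.mk.injEq .. ▸ he
      exact Or.inr (h1 ▸ Relation.ReflTransGen.refl)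
    · rcases ih with h1 | h1
      · exact Or.inl (h1.head hm)
      · exact Or.inr (h1.head hm)

lemma rtg_insert' {B : Finset (Fin n × Fin n)} {i t : Fin n}
    (hti : ¬ Relation.ReflTransGen (arcStep B) t i) {x y : Fin n}
    (h : Relation.ReflTransGen (arcStep (insert (i, t) B)) x y) :
    Relation.ReflTransGen (arcStep B) x y ∨
      (Relation.ReflTransGen (arcStep B) x i ∧ Relation.ReflTransGen (arcStep B) t y) := by
  induction h using Relation.ReflTransGen.head_induction_on with
  | refl => exact Or.inl .refl
  | head hab hbc ih =>
    rcases Finset.mem_insert.mp hab with he | hm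
    · obtain ⟨h1, h2⟩ := Prod.mk.injEq .. ▸ he
      subst h1; subst h2
      rcases ih with h1 | ⟨h1, _⟩
      · exact Or.inr ⟨.refl, h1⟩
      · exact absurd h1 hti
    · rcases ih with h1 | ⟨h1, h2⟩
      · exact Or.inl (h1.head hm)
      · exact Or.inr ⟨h1.head hm, h2⟩

end Helpers
section Helpers2

variable {n : ℕ}

lemma forest_insert {B : Finset (Fin n × Fin n)} (hB : IsInForest B) {i t : Fin n}
    (hroot : IsRootOf B i) (hti : t ≠ i)
    (hnr : ¬ Relation.ReflTransGen (arcStep B) t i) :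
    IsInForest (insert (i, t) B) := by
  refine ⟨?_, ?_, ?_⟩
  · intro a ha
    rcases Finset.mem_insert.mp ha with he | hm
    · subst he; exact fun h => hti h.symm
    · exact hB.1 a hm
  · intro v
    rw [Finset.filter_insert]
    by_cases hv : v = i
    · subst hv
      have hemp : B.filter (fun a => a.1 = v) = ∅ := by
        rw [Finset.filter_eq_empty_iff]
        exact fun {a} ha => hroot a ha
      simp [hemp]
    · rw [if_neg (by simpa using Ne.symm hv)]
      exact hB.2.1 v
  · intro v hv
    obtain ⟨w, hvw, hwv⟩ := Relation.TransGen.head'_iff.mp hv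
    rcases Finset.mem_insert.mp hvw with he | hm
    · obtain ⟨h1, h2⟩ := Prod.mk.injEq .. ▸ he
      subst h1; subst h2
      rcases rtg_insert' hnr hwv with h1 | ⟨h1, _⟩
      · exact hnr h1
      · exact hnr h1
    · rcases rtg_insert' hnr hwv with h1 | ⟨h1, h2⟩
      · exact hB.2.2 v (Relation.TransGen.head' hm h1)
      · exact hnr (h2.trans (Relation.ReflTransGen.head hm h1))

lemma root_insert {B : Finset (Fin n × Fin n)} {i t j : Fin n} :
    IsRootOf (insert (i, t) B) j ↔ j ≠ i ∧ IsRootOf B j := by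
  constructor
  · intro h
    exact ⟨fun he => h (i, t) (Finset.mem_insert_self _ _) (he ▸ rfl),
      fun a ha => h a (Finset.mem_insert_of_mem ha)⟩
  · rintro ⟨hji, h⟩ a ha
    rcases Finset.mem_insert.mp ha with he | hm
    · rw [he]; exact fun hh => hji hh.symm
    · exact h a hm

lemma root_erase {A : Finset (Fin n × Fin n)} (hA : IsInForest A) {i s j : Fin n}
    (hmem : (i, s) ∈ A) :
    IsRootOf (A.erase (i, s)) j ↔ IsRootOf A j ∨ j = i := by
  constructor
  · intro h
    by_cases hji : j = i
    · exact Or.inr hji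
    · refine Or.inl fun a ha hfst => ?_
      have hne : a ≠ (i, s) := fun he => hji ((he ▸ hfst).symm)
      exact h a (Finset.mem_erase.mpr ⟨hne, ha⟩) hfst
  · rintro (h | h) a ha hfst
    · exact h a (Finset.mem_erase.mp ha).2 hfst
    · obtain ⟨hne, haA⟩ := Finset.mem_erase.mp ha
      have hfst' : a.1 = i := hfst.trans h
      have ha2 : (i, a.2) ∈ A := by
        rw [show (i, a.2) = a from Prod.ext hfst'.symm rfl]; exact haA
      have := arc_det hA ha2 hmem
      exact hne (Prod.ext hfst' (by exact this))

lemma rtg_confluence {A : Finset (Fin n × Fin n)} (hA : IsInForest A) {t i j : Fin n}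
    (h1 : Relation.ReflTransGen (arcStep A) t i)
    (hj : IsRootOf A j) :
    Relation.ReflTransGen (arcStep A) t j → Relation.ReflTransGen (arcStep A) i j := by
  induction h1 using Relation.ReflTransGen.head_induction_on with
  | refl => exact id
  | head hab hbc ih =>
    intro hxj
    rcases hxj.cases_head with he | ⟨d, hd, hdj⟩
    · exact absurd (he ▸ rfl) (hj _ (he ▸ hab))
    · exact ih (arc_det hA hd hab ▸ hdj)

lemma intree_congr {A : Finset (Fin n × Fin n)} (hA : IsInForest A) {t i j : Fin n}
    (h : Relation.ReflTransGen (arcStep A) t i) :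
    (InTreeOf A t j ↔ InTreeOf A i j) := by
  constructor
  · rintro ⟨hr, hp⟩
    exact ⟨hr, rtg_confluence hA h hr hp⟩
  · rintro ⟨hr, hp⟩
    exact ⟨hr, h.trans hp⟩

lemma root_intree {A : Finset (Fin n × Fin n)} {i j : Fin n} (h : IsRootOf A i) :
    (InTreeOf A i j ↔ i = j) := by
  constructor
  · rintro ⟨_, hp⟩
    exact root_rtg h hp
  · rintro rfl
    exact ⟨h, .refl⟩

lemma intree_insert {B : Finset (Fin n × Fin n)} {i t x j : Fin n}
    (hx : ¬ Relation.ReflTransGen (arcStep B) x i) :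
    InTreeOf (insert (i, t) B) x j ↔ InTreeOf B x j := by
  constructor
  · rintro ⟨hr, hp⟩
    rcases rtg_insert hp with h1 | h1
    · exact ⟨(root_insert.mp hr).2, h1⟩
    · exact absurd h1 hx
  · rintro ⟨hr, hp⟩
    have hji : j ≠ i := fun he => hx (he ▸ hp)
    exact ⟨root_insert.mpr ⟨hji, hr⟩, rtg_mono (Finset.subset_insert _ _) hp⟩

lemma weight_insert (W : Matrix (Fin n) (Fin n) ℝ) {B : Finset (Fin n × Fin n)}
    {a : Fin n × Fin n} (ha : a ∉ B) :
    digraphWeight W (insert a B) = W a.1 a.2 * digraphWeight W B :=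
  Finset.prod_insert ha

lemma weight_erase (W : Matrix (Fin n) (Fin n) ℝ) {A : Finset (Fin n × Fin n)}
    {a : Fin n × Fin n} (ha : a ∈ A) :
    digraphWeight W A = W a.1 a.2 * digraphWeight W (A.erase a) :=
  (Finset.mul_prod_erase A _ ha).symm

lemma notroot_exists {A : Finset (Fin n × Fin n)} {i : Fin n} (h : ¬ IsRootOf A i) :
    ∃ t, (i, t) ∈ A := by
  unfold IsRootOf at h
  push_neg at h
  obtain ⟨a, ha, hfst⟩ := h
  exact ⟨a.2, by rwa [show ((i, a.2) : Fin n × Fin n) = a from Prod.ext hfst.symm rfl]⟩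

end Helpers2
section Helpers3

variable {n : ℕ}

lemma forest_inj_fst {A : Finset (Fin n × Fin n)} (hA : IsInForest A) :
    Set.InjOn Prod.fst (A : Set (Fin n × Fin n)) := by
  intro a ha b hb hab
  have ha' : (a.1, a.2) ∈ A := by rwa [Prod.mk.eta]
  have hb' : (a.1, b.2) ∈ A := by rw [hab]; rwa [Prod.mk.eta]
  have := arc_det hA ha' hb'
  exact Prod.ext hab this

lemma card_image_fst {A : Finset (Fin n × Fin n)} (hA : IsInForest A) :
    (A.image Prod.fst).card = A.card :=
  Finset.card_image_of_injOn (forest_inj_fst hA)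

lemma root_iff_image {A : Finset (Fin n × Fin n)} {j : Fin n} :
    IsRootOf A j ↔ j ∉ A.image Prod.fst := by
  simp only [Finset.mem_image, not_exists]
  constructor
  · rintro h a ⟨ha, hfst⟩
    exact h a ha hfst
  · intro h a ha hfst
    exact h a ⟨ha, hfst⟩

lemma roots_card {A : Finset (Fin n × Fin n)} (hA : IsInForest A) :
    (Finset.univ.filter (fun j : Fin n => IsRootOf A j)).card = n - A.card := by
  have h1 : Finset.univ.filter (fun j : Fin n => IsRootOf A j) =
      Finset.univ \ A.image Prod.fst := by
    ext j
    simp [root_iff_image]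
  rw [h1, Finset.card_sdiff_of_subset (Finset.subset_univ _), card_image_fst hA, Finset.card_univ,
    Fintype.card_fin]

lemma forest_card_le {A : Finset (Fin n × Fin n)} (hA : IsInForest A) : A.card ≤ n := by
  rw [← card_image_fst hA]
  calc (A.image Prod.fst).card ≤ Finset.univ.card := Finset.card_le_card (Finset.subset_univ _)
  _ = n := by simp

lemma intree_self {A : Finset (Fin n × Fin n)} {j : Fin n} :
    InTreeOf A j j ↔ IsRootOf A j :=
  ⟨fun h => h.1, fun h => ⟨h, .refl⟩⟩

lemma forest_empty : IsInForest (∅ : Finset (Fin n × Fin n)) := by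
  refine ⟨by simp, by simp, fun v hv => ?_⟩
  obtain ⟨w, hvw, _⟩ := Relation.TransGen.head'_iff.mp hv
  simp [arcStep] at hvw

lemma intree_empty {i j : Fin n} : InTreeOf (∅ : Finset (Fin n × Fin n)) i j ↔ i = j := by
  constructor
  · rintro ⟨_, hp⟩
    rcases hp.cases_head with he | ⟨c, hc, _⟩
    · exact he
    · simp [arcStep] at hc
  · rintro rfl
    exact ⟨by simp [IsRootOf], .refl⟩

lemma qF_zero (W : Matrix (Fin n) (Fin n) ℝ) (i j : Fin n) :
    qF W 0 i j = if i = j then 1 else 0 := by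
  rw [qF, forestWeight]
  rw [Finset.sum_eq_single (∅ : Finset (Fin n × Fin n))]
  · simp only [Finset.card_empty, intree_empty]
    by_cases h : i = j <;> simp [h, forest_empty, digraphWeight]
  · intro A _ hA
    rw [if_neg]
    rintro ⟨_, hc, _⟩
    exact hA (Finset.card_eq_zero.mp hc)
  · intro h
    exact absurd (Finset.mem_univ _) h

lemma sigmaF_zero (W : Matrix (Fin n) (Fin n) ℝ) : sigmaF W 0 = 1 := by
  rw [sigmaF, forestWeight]
  rw [Finset.sum_eq_single (∅ : Finset (Fin n × Fin n))]
  · simp [forest_empty, digraphWeight]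
  · intro A _ hA
    rw [if_neg]
    rintro ⟨_, hc⟩
    exact hA (Finset.card_eq_zero.mp hc)
  · intro h
    exact absurd (Finset.mem_univ _) h

end Helpers3
section Helpers4

variable {n : ℕ}

lemma rtg_erase {A : Finset (Fin n × Fin n)} {i s x y : Fin n}
    (hx : ¬ Relation.ReflTransGen (arcStep A) x i)
    (h : Relation.ReflTransGen (arcStep A) x y) :
    Relation.ReflTransGen (arcStep (A.erase (i, s))) x y := by
  induction h using Relation.ReflTransGen.head_induction_on with
  | refl => exact .refl
  | @head a c hab hbc ih =>
    by_cases he : (a, c) = ((i, s) : Fin n × Fin n)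
    · have hai : a = i := congrArg Prod.fst he
      exact absurd (hai ▸ Relation.ReflTransGen.refl) hx
    · have hci : ¬ Relation.ReflTransGen (arcStep A) c i :=
        fun hr => hx (Relation.ReflTransGen.head hab hr)
      exact Relation.ReflTransGen.head (Finset.mem_erase.mpr ⟨he, hab⟩) (ih hci)

lemma intree_erase {A : Finset (Fin n × Fin n)} (hA : IsInForest A) {i s x j : Fin n}
    (hmem : (i, s) ∈ A) (hx : ¬ Relation.ReflTransGen (arcStep A) x i) :
    InTreeOf (A.erase (i, s)) x j ↔ InTreeOf A x j := by
  constructor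
  · rintro ⟨hr, hp⟩
    have hji : j ≠ i := by
      rintro rfl
      exact hx (rtg_mono (Finset.erase_subset _ _) hp)
    rcases (root_erase hA hmem).mp hr with h | h
    · exact ⟨h, rtg_mono (Finset.erase_subset _ _) hp⟩
    · exact absurd h hji
  · rintro ⟨hr, hp⟩
    exact ⟨(root_erase hA hmem).mpr (Or.inl hr), rtg_erase hx hp⟩

noncomputable def outT (A : Finset (Fin n × Fin n)) (i : Fin n) : Fin n :=
  if h : ∃ t, (i, t) ∈ A then h.choose else i

lemma outT_mem {A : Finset (Fin n × Fin n)} {i : Fin n} (h : ¬ IsRootOf A i) :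
    (i, outT A i) ∈ A := by
  have he := notroot_exists h
  rw [outT, dif_pos he]
  exact he.choose_spec

lemma outT_eq {A : Finset (Fin n × Fin n)} (hA : IsInForest A) {i u : Fin n}
    (h : (i, u) ∈ A) : outT A i = u := by
  have he : ∃ t, (i, t) ∈ A := ⟨u, h⟩
  rw [outT, dif_pos he]
  exact arc_det hA he.choose_spec h

lemma forest_nonroot_card {A : Finset (Fin n × Fin n)} {i : Fin n}
    (h : ¬ IsRootOf A i) : 1 ≤ A.card :=
  Finset.card_pos.mpr ⟨_, outT_mem h⟩

end Helpers4
section KeyDefs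

variable {n : ℕ}

def condA (k : ℕ) (i : Fin n) (p : Finset (Fin n × Fin n) × Fin n) : Prop :=
  IsInForest p.1 ∧ p.1.card = k ∧ IsRootOf p.1 i ∧
    ¬ Relation.ReflTransGen (arcStep p.1) p.2 i

def condB (k : ℕ) (i : Fin n) (p : Finset (Fin n × Fin n) × Fin n) : Prop :=
  IsInForest p.1 ∧ p.1.card = k ∧ Relation.ReflTransGen (arcStep p.1) p.2 i

def condC (k : ℕ) (i : Fin n) (p : Finset (Fin n × Fin n) × Fin n) : Prop :=
  IsInForest p.1 ∧ p.1.card = k ∧ ¬ IsRootOf p.1 i ∧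
    ¬ Relation.ReflTransGen (arcStep p.1) p.2 i

def condH (k : ℕ) (i : Fin n) (q : Finset (Fin n × Fin n) × Fin n) : Prop :=
  IsInForest q.1 ∧ q.1.card = k + 1 ∧ (i, q.2) ∈ q.1

noncomputable def termT {n : ℕ} (W : Matrix (Fin n) (Fin n) ℝ) (i j : Fin n)
    (p : Finset (Fin n × Fin n) × Fin n) : ℝ :=
  W i p.2 * digraphWeight W p.1 *
    ((if InTreeOf p.1 p.2 j then (1 : ℝ) else 0) - (if InTreeOf p.1 i j then (1 : ℝ) else 0))

noncomputable def termH {n : ℕ} (W : Matrix (Fin n) (Fin n) ℝ) (i j : Fin n)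
    (q : Finset (Fin n × Fin n) × Fin n) : ℝ :=
  digraphWeight W q.1 *
    ((if InTreeOf q.1 i j then (1 : ℝ) else 0) - (if i = j then (1 : ℝ) else 0))

lemma flipC (W : Matrix (Fin n) (Fin n) ℝ) (j : Fin n) {F : Finset (Fin n × Fin n)}
    {i s t : Fin n} (hF : IsInForest F) (hs : (i, s) ∈ F)
    (hrtg : ¬ Relation.ReflTransGen (arcStep F) t i) (hts : t ≠ s) :
    IsInForest (insert (i, t) (F.erase (i, s))) ∧
    (insert (i, t) (F.erase (i, s))).card = F.card ∧
    ¬ Relation.ReflTransGen (arcStep (insert (i, t) (F.erase (i, s)))) s i ∧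
    ((insert (i, t) (F.erase (i, s))).erase (i, t) = F.erase (i, s)) ∧
    (W i t * digraphWeight W F = W i s * digraphWeight W (insert (i, t) (F.erase (i, s)))) ∧
    (InTreeOf (insert (i, t) (F.erase (i, s))) s j ↔ InTreeOf F i j) ∧
    (InTreeOf (insert (i, t) (F.erase (i, s))) i j ↔ InTreeOf F t j) := by
  have hti : t ≠ i := fun he => hrtg (he ▸ Relation.ReflTransGen.refl)
  have hitF : (i, t) ∉ F := fun h => hts (arc_det hF h hs)
  have hitFm : (i, t) ∉ F.erase (i, s) := fun h => hitF (Finset.mem_of_mem_erase h)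
  have hFm : IsInForest (F.erase (i, s)) := forest_subset (Finset.erase_subset _ _) hF
  have hrootm : IsRootOf (F.erase (i, s)) i := (root_erase hF hs).mpr (Or.inr rfl)
  have hrtgm : ¬ Relation.ReflTransGen (arcStep (F.erase (i, s))) t i :=
    fun h => hrtg (rtg_mono (Finset.erase_subset _ _) h)
  have hF'' : IsInForest (insert (i, t) (F.erase (i, s))) :=
    forest_insert hFm hrootm hti hrtgm
  have hsi : ¬ Relation.ReflTransGen (arcStep F) s i := no_rtg_back hF hs
  have hsim : ¬ Relation.ReflTransGen (arcStep (F.erase (i, s))) s i :=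
    fun h => hsi (rtg_mono (Finset.erase_subset _ _) h)
  have hiff1 : InTreeOf (insert (i, t) (F.erase (i, s))) s j ↔ InTreeOf F i j := by
    calc InTreeOf (insert (i, t) (F.erase (i, s))) s j
        ↔ InTreeOf (F.erase (i, s)) s j := intree_insert hsim
      _ ↔ InTreeOf F s j := intree_erase hF hs hsi
      _ ↔ InTreeOf F i j := (intree_congr hF (Relation.ReflTransGen.single hs)).symm
  have hiff2 : InTreeOf (insert (i, t) (F.erase (i, s))) i j ↔ InTreeOf F t j := by
    calc InTreeOf (insert (i, t) (F.erase (i, s))) i j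
        ↔ InTreeOf (insert (i, t) (F.erase (i, s))) t j :=
          intree_congr hF'' (Relation.ReflTransGen.single (Finset.mem_insert_self _ _))
      _ ↔ InTreeOf (F.erase (i, s)) t j := intree_insert hrtgm
      _ ↔ InTreeOf F t j := intree_erase hF hs hrtg
  refine ⟨hF'', ?_, ?_, ?_, ?_, hiff1, hiff2⟩
  · rw [Finset.card_insert_of_notMem hitFm, Finset.card_erase_of_mem hs]
    exact Nat.succ_pred_eq_of_pos (Finset.card_pos.mpr ⟨_, hs⟩)
  · intro h
    rcases rtg_insert h with h1 | h1 <;> exact hsim h1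
  · exact Finset.erase_insert hitFm
  · rw [weight_erase W hs, weight_insert W hitFm]
    ring

end KeyDefs
section KeyC

variable {n : ℕ}

/-- the involution for class C -/
noncomputable def flipMap (k : ℕ) (i : Fin n) (p : Finset (Fin n × Fin n) × Fin n) :
    Finset (Fin n × Fin n) × Fin n :=
  if condC k i p ∧ p.2 ≠ outT p.1 i then
    (insert (i, p.2) (p.1.erase (i, outT p.1 i)), outT p.1 i)
  else p

lemma termT_zero_of_rtg {W : Matrix (Fin n) (Fin n) ℝ} {i j : Fin n}
    {p : Finset (Fin n × Fin n) × Fin n} (hF : IsInForest p.1)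
    (h : Relation.ReflTransGen (arcStep p.1) p.2 i) : termT W i j p = 0 := by
  rw [termT, if_congr (intree_congr hF h) rfl rfl]
  ring

lemma keyC (W : Matrix (Fin n) (Fin n) ℝ) (k : ℕ) (i j : Fin n) :
    ∑ p : Finset (Fin n × Fin n) × Fin n,
      (if condC k i p then termT W i j p else 0) = 0 := by
  have fix_zero : ∀ p : Finset (Fin n × Fin n) × Fin n,
      condC k i p → p.2 = outT p.1 i →
      (if condC k i p then termT W i j p else 0) = 0 := by
    intro p hc he
    rw [if_pos hc]
    have hs : (i, p.2) ∈ p.1 := he ▸ outT_mem hc.2.2.1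
    rw [termT, if_congr ((intree_congr hc.1 (Relation.ReflTransGen.single hs)).symm) rfl rfl]
    ring
  have main : ∀ p : Finset (Fin n × Fin n) × Fin n, condC k i p → p.2 ≠ outT p.1 i →
      condC k i (insert (i, p.2) (p.1.erase (i, outT p.1 i)), outT p.1 i) ∧
      outT (insert (i, p.2) (p.1.erase (i, outT p.1 i))) i = p.2 ∧
      (insert (i, p.2) (p.1.erase (i, outT p.1 i))).erase (i, p.2) = p.1.erase (i, outT p.1 i) ∧
      insert (i, outT p.1 i) (p.1.erase (i, outT p.1 i)) = p.1 ∧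
      termT W i j p +
        termT W i j (insert (i, p.2) (p.1.erase (i, outT p.1 i)), outT p.1 i) = 0 := by
    rintro ⟨F, t⟩ hc hne
    obtain ⟨hF, hcard, hnr, hrtg⟩ := hc
    set s := outT F i with hsdef
    have hs : (i, s) ∈ F := outT_mem hnr
    obtain ⟨hF'', hcard'', hrtg'', herase'', hw, hiff1, hiff2⟩ := flipC W j hF hs hrtg hne
    have hit'' : (i, t) ∈ insert (i, t) (F.erase (i, s)) := Finset.mem_insert_self _ _
    have houtT'' : outT (insert (i, t) (F.erase (i, s))) i = t := outT_eq hF'' hit''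
    refine ⟨⟨hF'', hcard''.trans hcard, fun hr => hr _ hit'' rfl, hrtg''⟩, houtT'', herase'',
      Finset.insert_erase hs, ?_⟩
    simp only [termT]
    rw [if_congr hiff1 rfl rfl, if_congr hiff2 rfl rfl, ← hw]
    ring
  have hflip_pos : ∀ p : Finset (Fin n × Fin n) × Fin n, condC k i p → p.2 ≠ outT p.1 i →
      flipMap k i p = (insert (i, p.2) (p.1.erase (i, outT p.1 i)), outT p.1 i) := by
    intro p hc hne
    unfold flipMap
    exact if_pos ⟨hc, hne⟩
  have hflip_neg : ∀ p : Finset (Fin n × Fin n) × Fin n, ¬ (condC k i p ∧ p.2 ≠ outT p.1 i) →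
      flipMap k i p = p := by
    intro p hc
    unfold flipMap
    exact if_neg hc
  refine Finset.sum_involution (fun p _ => flipMap k i p) ?_ ?_ (fun _ _ => Finset.mem_univ _) ?_
  · intro p _
    beta_reduce
    by_cases hc : condC k i p
    · by_cases hne : p.2 ≠ outT p.1 i
      · obtain ⟨hcq, _, _, _, hterm⟩ := main p hc hne
        rw [hflip_pos p hc hne, if_pos hc, if_pos hcq]
        exact hterm
      · rw [hflip_neg p (fun h => hne h.2), fix_zero p hc (not_not.mp hne)]
        ring
    · rw [hflip_neg p (fun h => hc h.1), if_neg hc]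
      ring
  · intro p _ h0
    beta_reduce
    by_cases hc : condC k i p
    · by_cases hne : p.2 ≠ outT p.1 i
      · rw [hflip_pos p hc hne]
        intro he
        exact hne ((congrArg Prod.snd he).symm ▸ rfl)
      · exact absurd (fix_zero p hc (not_not.mp hne)) h0
    · exact absurd (if_neg hc) h0
  · intro p _
    beta_reduce
    by_cases hc : condC k i p
    · by_cases hne : p.2 ≠ outT p.1 i
      · obtain ⟨hcq, houtq, heraseq, hinsq, _⟩ := main p hc hne
        rw [hflip_pos p hc hne]
        have hne2 : (insert (i, p.2) (p.1.erase (i, outT p.1 i)), outT p.1 i).2 ≠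
            outT (insert (i, p.2) (p.1.erase (i, outT p.1 i)), outT p.1 i).1 i := by
          show outT p.1 i ≠ outT (insert (i, p.2) (p.1.erase (i, outT p.1 i))) i
          rw [houtq]
          exact fun h => hne h.symm
        rw [hflip_pos _ hcq hne2]
        refine Prod.ext ?_ ?_
        · show insert (i, outT p.1 i)
            ((insert (i, p.2) (p.1.erase (i, outT p.1 i))).erase
              (i, outT (insert (i, p.2) (p.1.erase (i, outT p.1 i))) i)) = p.1
          rw [houtq, heraseq, hinsq]
        · exact houtq
      · rw [hflip_neg p (fun h => hne h.2), hflip_neg p (fun h => hne h.2)]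
    · rw [hflip_neg p (fun h => hc h.1), hflip_neg p (fun h => hc h.1)]

end KeyC
section KeyA

variable {n : ℕ}

lemma keyA (W : Matrix (Fin n) (Fin n) ℝ) (k : ℕ) (i j : Fin n) :
    ∑ p : Finset (Fin n × Fin n) × Fin n,
      (if condA k i p then termT W i j p else 0) =
    ∑ q : Finset (Fin n × Fin n) × Fin n,
      (if condH k i q then termH W i j q else 0) := by
  rw [← Finset.sum_filter, ← Finset.sum_filter]
  refine Finset.sum_nbij' (fun p => (insert (i, p.2) p.1, p.2))
    (fun q => (q.1.erase (i, q.2), q.2)) ?_ ?_ ?_ ?_ ?_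
  · intro p hp
    obtain ⟨hF, hcard, hroot, hrtg⟩ := (Finset.mem_filter.mp hp).2
    have hti : p.2 ≠ i := fun he => hrtg (he ▸ Relation.ReflTransGen.refl)
    have hmem : ((i, p.2) : Fin n × Fin n) ∉ p.1 := fun h => hroot _ h rfl
    refine Finset.mem_filter.mpr ⟨Finset.mem_univ _,
      forest_insert hF hroot hti hrtg, ?_, Finset.mem_insert_self _ _⟩
    rw [Finset.card_insert_of_notMem hmem, hcard]
  · intro q hq
    obtain ⟨hG, hcard, hmem⟩ := (Finset.mem_filter.mp hq).2
    refine Finset.mem_filter.mpr ⟨Finset.mem_univ _,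
      forest_subset (Finset.erase_subset _ _) hG, ?_,
      (root_erase hG hmem).mpr (Or.inr rfl),
      fun h => no_rtg_back hG hmem (rtg_mono (Finset.erase_subset _ _) h)⟩
    rw [Finset.card_erase_of_mem hmem, hcard]
    omega
  · intro p hp
    obtain ⟨_, _, hroot, _⟩ := (Finset.mem_filter.mp hp).2
    have hmem : ((i, p.2) : Fin n × Fin n) ∉ p.1 := fun h => hroot _ h rfl
    exact Prod.ext (Finset.erase_insert hmem) rfl
  · intro q hq
    obtain ⟨_, _, hmem⟩ := (Finset.mem_filter.mp hq).2
    exact Prod.ext (Finset.insert_erase hmem) rfl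
  · intro p hp
    obtain ⟨hF, hcard, hroot, hrtg⟩ := (Finset.mem_filter.mp hp).2
    have hti : p.2 ≠ i := fun he => hrtg (he ▸ Relation.ReflTransGen.refl)
    have hmem : ((i, p.2) : Fin n × Fin n) ∉ p.1 := fun h => hroot _ h rfl
    have hG : IsInForest (insert (i, p.2) p.1) := forest_insert hF hroot hti hrtg
    have hiff1 : InTreeOf (insert (i, p.2) p.1) i j ↔ InTreeOf p.1 p.2 j := by
      calc InTreeOf (insert (i, p.2) p.1) i j
          ↔ InTreeOf (insert (i, p.2) p.1) p.2 j :=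
            intree_congr hG (Relation.ReflTransGen.single (Finset.mem_insert_self _ _))
        _ ↔ InTreeOf p.1 p.2 j := intree_insert hrtg
    have hiff2 : InTreeOf p.1 i j ↔ i = j := root_intree hroot
    rw [termT, termH]
    show W i p.2 * digraphWeight W p.1 * _ = digraphWeight W (insert (i, p.2) p.1) * _
    rw [weight_insert W hmem, if_congr hiff1 rfl rfl, if_congr hiff2 rfl rfl]

lemma keyE (W : Matrix (Fin n) (Fin n) ℝ) (k : ℕ) (i j : Fin n) :
    ∑ q : Finset (Fin n × Fin n) × Fin n,
      (if condH k i q then termH W i j q else 0) =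
    qF W (k + 1) i j - (if i = j then (1 : ℝ) else 0) * sigmaF W (k + 1) := by
  rw [qF, sigmaF, forestWeight, forestWeight, Finset.mul_sum, ← Finset.sum_sub_distrib,
    Fintype.sum_prod_type]
  refine Finset.sum_congr rfl fun G _ => ?_
  by_cases hf : IsInForest G ∧ G.card = k + 1
  · rw [if_pos hf]
    by_cases hroot : IsRootOf G i
    · have hz : ∀ t : Fin n, (if condH k i (G, t) then termH W i j (G, t) else 0) = 0 := by
        intro t
        rw [if_neg]
        rintro ⟨_, _, hmem⟩
        exact hroot _ hmem rfl
      rw [Finset.sum_congr rfl fun t _ => hz t, Finset.sum_const, smul_zero]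
      by_cases hij : i = j
      · rw [if_pos ⟨hf.1, hf.2, (root_intree hroot).mpr hij⟩, if_pos hij]
        ring
      · rw [if_neg (fun h => hij ((root_intree hroot).mp h.2.2)), if_neg hij]
        ring
    · obtain ⟨s, hs⟩ := notroot_exists hroot
      have hcond : ∀ t : Fin n, condH k i (G, t) ↔ t = s := by
        intro t
        constructor
        · rintro ⟨_, _, hmem⟩
          exact arc_det hf.1 hmem hs
        · rintro rfl
          exact ⟨hf.1, hf.2, hs⟩
      have hl : ∑ t : Fin n, (if condH k i (G, t) then termH W i j (G, t) else 0)
          = digraphWeight W G *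
            ((if InTreeOf G i j then (1 : ℝ) else 0) - (if i = j then (1 : ℝ) else 0)) := by
        rw [Finset.sum_congr rfl fun t _ => if_congr (hcond t) rfl rfl,
          Finset.sum_ite_eq' Finset.univ s (fun t => termH W i j (G, t))]
        exact if_pos (Finset.mem_univ s)
      rw [hl]
      by_cases hT : InTreeOf G i j
      · rw [if_pos hT,
          if_pos (show IsInForest G ∧ #G = k + 1 ∧ InTreeOf G i j from ⟨hf.1, hf.2, hT⟩)]
        by_cases hij : i = j
        · rw [if_pos hij]; ring
        · rw [if_neg hij]; ring
      · rw [if_neg hT,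
          if_neg (show ¬(IsInForest G ∧ #G = k + 1 ∧ InTreeOf G i j) from fun h => hT h.2.2)]
        by_cases hij : i = j
        · rw [if_pos hij]; ring
        · rw [if_neg hij]; ring
  · have hz : ∀ t : Fin n, (if condH k i (G, t) then termH W i j (G, t) else 0) = 0 := by
      intro t
      rw [if_neg]
      rintro ⟨h1, h2, _⟩
      exact hf ⟨h1, h2⟩
    rw [Finset.sum_congr rfl fun t _ => hz t, Finset.sum_const, smul_zero,
      if_neg (fun h => hf ⟨h.1, h.2.1⟩), if_neg hf]
    ring

end KeyA
section KeyStep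

variable {n : ℕ}

lemma keyB (W : Matrix (Fin n) (Fin n) ℝ) (k : ℕ) (i j : Fin n) :
    ∑ p : Finset (Fin n × Fin n) × Fin n,
      (if condB k i p then termT W i j p else 0) = 0 := by
  refine Finset.sum_eq_zero fun p _ => ?_
  by_cases hb : condB k i p
  · rw [if_pos hb, termT_zero_of_rtg hb.1 hb.2.2]
  · rw [if_neg hb]

lemma keySplit (W : Matrix (Fin n) (Fin n) ℝ) (k : ℕ) (i j : Fin n)
    (p : Finset (Fin n × Fin n) × Fin n) :
    (if IsInForest p.1 ∧ p.1.card = k then termT W i j p else 0) =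
      (if condA k i p then termT W i j p else 0) +
      (if condB k i p then termT W i j p else 0) +
      (if condC k i p then termT W i j p else 0) := by
  by_cases hf : IsInForest p.1 ∧ p.1.card = k
  · by_cases hr : Relation.ReflTransGen (arcStep p.1) p.2 i
    · rw [if_pos hf, if_neg (show ¬ condA k i p from fun h => h.2.2.2 hr),
        if_pos (show condB k i p from ⟨hf.1, hf.2, hr⟩),
        if_neg (show ¬ condC k i p from fun h => h.2.2.2 hr)]
      ring
    · by_cases hro : IsRootOf p.1 i
      · rw [if_pos hf, if_pos (show condA k i p from ⟨hf.1, hf.2, hro, hr⟩),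
          if_neg (show ¬ condB k i p from fun h => hr h.2.2),
          if_neg (show ¬ condC k i p from fun h => h.2.2.1 hro)]
        ring
      · rw [if_pos hf, if_neg (show ¬ condA k i p from fun h => hro h.2.2.1),
          if_neg (show ¬ condB k i p from fun h => hr h.2.2),
          if_pos (show condC k i p from ⟨hf.1, hf.2, hro, hr⟩)]
        ring
  · rw [if_neg hf, if_neg (show ¬ condA k i p from fun h => hf ⟨h.1, h.2.1⟩),
      if_neg (show ¬ condB k i p from fun h => hf ⟨h.1, h.2.1⟩),
      if_neg (show ¬ condC k i p from fun h => hf ⟨h.1, h.2.1⟩)]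
    ring

lemma keyQsum (W : Matrix (Fin n) (Fin n) ℝ) (k : ℕ) (i j t x : Fin n) :
    ∑ F : Finset (Fin n × Fin n),
      (if IsInForest F ∧ F.card = k then
        W i t * digraphWeight W F * (if InTreeOf F x j then (1 : ℝ) else 0) else 0) =
    W i t * qF W k x j := by
  rw [qF, forestWeight, Finset.mul_sum]
  refine Finset.sum_congr rfl fun F _ => ?_
  by_cases hf : IsInForest F ∧ F.card = k
  · by_cases hT : InTreeOf F x j
    · rw [if_pos hf, if_pos hT,
        if_pos (show IsInForest F ∧ F.card = k ∧ InTreeOf F x j from ⟨hf.1, hf.2, hT⟩)]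
      ring
    · rw [if_pos hf, if_neg hT, if_neg
        (show ¬(IsInForest F ∧ F.card = k ∧ InTreeOf F x j) from fun h => hT h.2.2)]
      ring
  · rw [if_neg hf, if_neg (fun h => hf ⟨h.1, h.2.1⟩)]
    ring

lemma keyStep (W : Matrix (Fin n) (Fin n) ℝ) (k : ℕ) (i j : Fin n) :
    (∑ t, W i t * qF W k t j) - (∑ t, W i t) * qF W k i j =
      qF W (k + 1) i j - (if i = j then (1 : ℝ) else 0) * sigmaF W (k + 1) := by
  have hLHS : ∑ p : Finset (Fin n × Fin n) × Fin n,
      (if IsInForest p.1 ∧ p.1.card = k then termT W i j p else 0) =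
      (∑ t, W i t * qF W k t j) - (∑ t, W i t) * qF W k i j := by
    rw [Fintype.sum_prod_type]
    have hpt : ∀ (F : Finset (Fin n × Fin n)) (t : Fin n),
        (if IsInForest F ∧ F.card = k then termT W i j (F, t) else 0) =
        (if IsInForest F ∧ F.card = k then
          W i t * digraphWeight W F * (if InTreeOf F t j then (1 : ℝ) else 0) else 0) -
        (if IsInForest F ∧ F.card = k then
          W i t * digraphWeight W F * (if InTreeOf F i j then (1 : ℝ) else 0) else 0) := by
      intro F t
      by_cases hf : IsInForest F ∧ F.card = k
      · rw [if_pos hf, if_pos hf, if_pos hf, termT]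
        ring
      · rw [if_neg hf, if_neg hf, if_neg hf]
        ring
    calc ∑ F : Finset (Fin n × Fin n), ∑ t : Fin n,
          (if IsInForest F ∧ F.card = k then termT W i j (F, t) else 0)
        = ∑ F : Finset (Fin n × Fin n), ∑ t : Fin n,
          ((if IsInForest F ∧ F.card = k then
            W i t * digraphWeight W F * (if InTreeOf F t j then (1 : ℝ) else 0) else 0) -
          (if IsInForest F ∧ F.card = k then
            W i t * digraphWeight W F * (if InTreeOf F i j then (1 : ℝ) else 0) else 0)) :=
          Finset.sum_congr rfl fun F _ => Finset.sum_congr rfl fun t _ => hpt F t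
      _ = (∑ F : Finset (Fin n × Fin n), ∑ t : Fin n,
            (if IsInForest F ∧ F.card = k then
              W i t * digraphWeight W F * (if InTreeOf F t j then (1 : ℝ) else 0) else 0)) -
          ∑ F : Finset (Fin n × Fin n), ∑ t : Fin n,
            (if IsInForest F ∧ F.card = k then
              W i t * digraphWeight W F * (if InTreeOf F i j then (1 : ℝ) else 0) else 0) := by
          rw [← Finset.sum_sub_distrib]
          exact Finset.sum_congr rfl fun F _ => Finset.sum_sub_distrib _ _
      _ = (∑ t : Fin n, W i t * qF W k t j) - ∑ t : Fin n, W i t * qF W k i j := by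
          rw [Finset.sum_comm, Finset.sum_comm
            (s := (Finset.univ : Finset (Finset (Fin n × Fin n))))]
          exact congrArg₂ (· - ·)
            (Finset.sum_congr rfl fun t _ => keyQsum W k i j t t)
            (Finset.sum_congr rfl fun t _ => keyQsum W k i j t i)
      _ = (∑ t, W i t * qF W k t j) - (∑ t, W i t) * qF W k i j := by
          rw [Finset.sum_mul]
  rw [← hLHS]
  calc ∑ p : Finset (Fin n × Fin n) × Fin n,
        (if IsInForest p.1 ∧ p.1.card = k then termT W i j p else 0)
      = ∑ p : Finset (Fin n × Fin n) × Fin n,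
        ((if condA k i p then termT W i j p else 0) +
         (if condB k i p then termT W i j p else 0) +
         (if condC k i p then termT W i j p else 0)) :=
        Finset.sum_congr rfl fun p _ => keySplit W k i j p
    _ = (∑ p : Finset (Fin n × Fin n) × Fin n, (if condA k i p then termT W i j p else 0)) +
        (∑ p : Finset (Fin n × Fin n) × Fin n, (if condB k i p then termT W i j p else 0)) +
        (∑ p : Finset (Fin n × Fin n) × Fin n, (if condC k i p then termT W i j p else 0)) := by
        rw [Finset.sum_add_distrib, Finset.sum_add_distrib]
    _ = ∑ q : Finset (Fin n × Fin n) × Fin n, (if condH k i q then termH W i j q else 0) := by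
        rw [keyB, keyC, keyA]
        ring
    _ = qF W (k + 1) i j - (if i = j then (1 : ℝ) else 0) * sigmaF W (k + 1) := keyE W k i j

end KeyStep
section QDiag

variable {n : ℕ}

lemma qdiag_sum (W : Matrix (Fin n) (Fin n) ℝ) (k : ℕ) :
    ∑ j : Fin n, qF W k j j = ((n : ℝ) - k) * sigmaF W k := by
  simp only [qF, sigmaF, forestWeight]
  rw [Finset.sum_comm, Finset.mul_sum]
  refine Finset.sum_congr rfl fun F _ => ?_
  by_cases hf : IsInForest F ∧ F.card = k
  · refine Eq.trans (Finset.sum_congr rfl fun j _ =>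
      (?_ : _ = if IsRootOf F j then digraphWeight W F else 0)) ?_
    · by_cases hr : IsRootOf F j
      · rw [if_pos hr, if_pos (show IsInForest F ∧ F.card = k ∧ InTreeOf F j j from
          ⟨hf.1, hf.2, intree_self.mpr hr⟩)]
      · rw [if_neg hr, if_neg (show ¬(IsInForest F ∧ F.card = k ∧ InTreeOf F j j) from
          fun h => hr h.2.2.1)]
    · rw [← Finset.sum_filter, Finset.sum_const, roots_card hf.1, if_pos hf,
        nsmul_eq_mul, Nat.cast_sub (forest_card_le hf.1), hf.2]
  · refine Eq.trans (Finset.sum_congr rfl fun j _ => (?_ : _ = (0 : ℝ))) ?_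
    · exact if_neg (fun h => hf ⟨h.1, h.2.1⟩)
    · rw [Finset.sum_const, smul_zero, if_neg hf, mul_zero]

end QDiag

/-- the recurrence `Q_0 = I`, `σ_0 = 1`, `σ_{k+1} = tr(L·Q_k)/(k+1)`,
`Q_{k+1} = -L·Q_k + σ_{k+1}·I` for the forest-weight matrices of a weighted digraph. -/
theorem stmt4 {n : ℕ} (hn : 1 ≤ n) (W : Matrix (Fin n) (Fin n) ℝ)
    (hW0 : ∀ i, W i i = 0) (hWnn : ∀ i j, 0 ≤ W i j) :
    (Matrix.of (fun i j => qF W 0 i j) = (1 : Matrix (Fin n) (Fin n) ℝ)) ∧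
    sigmaF W 0 = 1 ∧
    ∀ k : ℕ, k + 1 ≤ n - 1 →
      sigmaF W (k + 1) =
        Matrix.trace (lap W * Matrix.of (fun i j => qF W k i j)) / (k + 1) ∧
      Matrix.of (fun i j => qF W (k + 1) i j) =
        -(lap W * Matrix.of (fun i j => qF W k i j)) +
          sigmaF W (k + 1) • (1 : Matrix (Fin n) (Fin n) ℝ) := by
  refine ⟨?_, sigmaF_zero W, fun k hk => ?_⟩
  · ext i j
    rw [Matrix.of_apply, qF_zero, Matrix.one_apply]
  have hentry : ∀ i j : Fin n, (lap W * Matrix.of (fun i j => qF W k i j)) i j =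
      (if i = j then (1 : ℝ) else 0) * sigmaF W (k + 1) - qF W (k + 1) i j := by
    intro i j
    have hstep := keyStep W k i j
    rw [Matrix.mul_apply]
    have h1 : ∀ t : Fin n, lap W i t * (Matrix.of (fun i j => qF W k i j)) t j =
        (if i = t then (∑ x, W i x) * qF W k t j else 0) - W i t * qF W k t j := by
      intro t
      rw [lap]
      simp only [Matrix.sub_apply, Matrix.diagonal_apply, Matrix.of_apply]
      by_cases he : i = t
      · rw [if_pos he, if_pos he]
        ring
      · rw [if_neg he, if_neg he]
        ring
    rw [Finset.sum_congr rfl fun t _ => h1 t, Finset.sum_sub_distrib,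
      Finset.sum_ite_eq Finset.univ i (fun t => (∑ x, W i x) * qF W k t j),
      if_pos (Finset.mem_univ i)]
    have hqii : (∑ x, W i x) * qF W k i j - ∑ t, W i t * qF W k t j =
        -((∑ t, W i t * qF W k t j) - (∑ x, W i x) * qF W k i j) := by ring
    rw [hqii, hstep]
    ring
  constructor
  · have htr : Matrix.trace (lap W * Matrix.of (fun i j => qF W k i j)) =
        ((k : ℝ) + 1) * sigmaF W (k + 1) := by
      rw [Matrix.trace]
      simp only [Matrix.diag_apply]
      rw [Finset.sum_congr rfl fun i _ => hentry i i, Finset.sum_sub_distrib, qdiag_sum]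
      have h2 : ∀ i : Fin n, (if i = i then (1 : ℝ) else 0) * sigmaF W (k + 1) =
          sigmaF W (k + 1) := by
        intro i
        rw [if_pos rfl, one_mul]
      rw [Finset.sum_congr rfl fun i _ => h2 i, Finset.sum_const, Finset.card_univ,
        Fintype.card_fin, nsmul_eq_mul]
      have hcast : ((n : ℝ) - ((k : ℝ) + 1)) = ((n : ℝ) - ((k + 1 : ℕ) : ℝ)) := by
        push_cast
        ring
      push_cast
      ring
    rw [htr]
    have hne : ((k : ℝ) + 1) ≠ 0 := by positivity
    rw [mul_div_cancel_left₀ _ hne]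
  · ext i j
    simp only [Matrix.add_apply, Matrix.neg_apply, Matrix.smul_apply, Matrix.one_apply,
      Matrix.of_apply, smul_eq_mul]
    rw [hentry i j]
    ring
end
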